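/- arXiv:1304.3783 — 8 statements merged into one kernel-verified Lean document; each statement's English description precedes it below -/
import Mathlib

section
/- Let M and N be finite matroids on ground sets E(M) and E(N) respectively, and let τ : E(M) → E(N) be a weak map, i.e., a function such that rk_N(τ(X)) ≤ rk_M(X) for every subset X ⊆ E(M). If τ is surjective onto E(N), then the induced map τ̄ from the flats of M to the flats of N given by τ̄(F) = cl_N(τ(F)) (the closure in N of the image of F) is a monotone map (with respect to inclusion of flats) that is surjective onto the set of flats of N. -/
/-!
A weak map can only lower ranks, so it maps `cl_M(A)` into `cl_N(τ(A))` whenever it preserves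
the rank of `A`: adding a point of `cl_M(A)` to `A` does not raise the rank in `M`, hence adding
its image to `τ(A)` does not raise the rank in `N`. Surjectivity lets us lift a basis `I` of a flat
`G` of `N` injectively to a set `A` with `τ(A) = I`; then `rk_M(A) ≤ |A| = |I| = rk_N(τ(A))`, and
`F = cl_M(A)` satisfies `cl_N(τ(F)) = cl_N(I) = G`.
-/

/-- The rank of a set `X` in a matroid `M`: the supremum of the cardinalities of
independent subsets of `X`. -/
noncomputable def matroidRk {α : Type*} (M : Matroid α) (X : Set α) : ℕ :=
  sSup (Set.ncard '' {I : Set α | M.Indep I ∧ I ⊆ X})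

open Set

namespace Matroid

variable {α β : Type*} {M : Matroid α} {N : Matroid β} {X : Set α} {e : α}

lemma matroidRk_eq_toNat_eRk (M : Matroid α) (X : Set α) :
    matroidRk M X = (M.eRk X).toNat := by
  by_cases hX : M.IsRkFinite X
  · obtain ⟨I, hI⟩ := M.exists_isBasis' X
    refine IsGreatest.csSup_eq ⟨⟨I, ⟨hI.indep, hI.subset⟩, ?_⟩, ?_⟩
    · rw [ncard_def, hI.encard_eq_eRk]
    rintro _ ⟨J, ⟨hJ, hJX⟩, rfl⟩
    exact ENat.toNat_le_toNat (hJ.encard_le_eRk_of_subset hJX) hX.eRk_lt_top.ne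
  -- Infinite rank: both sides are junk `0` (`sSup` of an unbounded set in `ℕ`, `ENat.toNat ⊤`).
  rw [eRk_eq_top_iff.2 hX, ENat.toNat_top]
  refine Nat.sSup_of_not_bddAbove fun ⟨n, hn⟩ ↦ ?_
  obtain ⟨J, hJX, hJ, hJcard⟩ :=
    le_eRk_iff.1 (eRk_eq_top_iff.2 hX ▸ le_top : ((n + 1 : ℕ) : ℕ∞) ≤ M.eRk X)
  have := hn ⟨J, ⟨hJ, hJX⟩, rfl⟩
  rw [ncard_def, hJcard, ENat.toNat_natCast] at this
  omega

lemma mem_closure_of_eRk_insert_le (hX : M.IsRkFinite X) (he : e ∈ M.E)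
    (h : M.eRk (insert e X) ≤ M.eRk X) : e ∈ M.closure X := by
  by_contra heX
  rw [eRk_insert_eq_add_one ⟨he, heX⟩, ENat.add_one_le_iff hX.eRk_lt_top.ne] at h
  exact h.false

lemma image_closure_subset_closure_of_eRk_le {τ : α → β} (hτ : MapsTo τ M.E N.E)
    (hweak : ∀ Y ⊆ M.E, N.eRk (τ '' Y) ≤ M.eRk Y) (hX : X ⊆ M.E)
    (hfin : N.IsRkFinite (τ '' X)) (hrk : M.eRk X ≤ N.eRk (τ '' X)) :
    τ '' M.closure X ⊆ N.closure (τ '' X) := by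
  rintro _ ⟨x, hx, rfl⟩
  have hxE : x ∈ M.E := mem_ground_of_mem_closure hx
  refine mem_closure_of_eRk_insert_le hfin (hτ hxE) ?_
  calc N.eRk (insert (τ x) (τ '' X)) = N.eRk (τ '' insert x X) := by rw [image_insert_eq]
    _ ≤ M.eRk (insert x X) := hweak _ (insert_subset hxE hX)
    _ ≤ M.eRk (M.closure X) := M.eRk_mono (insert_subset hx (M.subset_closure X hX))
    _ = M.eRk X := M.eRk_closure_eq X
    _ ≤ N.eRk (τ '' X) := hrk

lemma exists_isFlat_closure_image_eq [N.RankFinite] {τ : α → β} (hsurj : τ '' M.E = N.E)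
    (hweak : ∀ Y ⊆ M.E, N.eRk (τ '' Y) ≤ M.eRk Y) {G : Set β} (hG : N.IsFlat G) :
    ∃ F, M.IsFlat F ∧ N.closure (τ '' F) = G := by
  obtain ⟨I, hI⟩ := N.exists_isBasis G
  obtain ⟨A, hAE, hA⟩ := SurjOn.exists_bijOn_subset
    (show SurjOn τ M.E I from hI.indep.subset_ground.trans hsurj.symm.subset)
  have hrk : M.eRk A ≤ N.eRk (τ '' A) := calc
    M.eRk A ≤ A.encard := M.eRk_le_encard A
    _ = N.eRk (τ '' A) := by rw [← hA.injOn.encard_image, hA.image_eq, hI.indep.eRk_eq_encard]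
  have hcl : N.closure (τ '' A) = G := by rw [hA.image_eq, hI.closure_eq_closure, hG.closure]
  refine ⟨M.closure A, M.isFlat_closure A, subset_antisymm ?_ ?_⟩ <;> rw [← hcl]
  · refine N.closure_subset_closure_of_subset_closure <|
      image_closure_subset_closure_of_eRk_le (hsurj ▸ mapsTo_image τ M.E) hweak hAE ?_ hrk
    exact N.isRkFinite_set _
  · exact N.closure_subset_closure (image_mono (M.subset_closure A hAE))

end Matroid

theorem engstrom_surjective_poset_map_general {α β : Type*} (M : Matroid α) (N : Matroid β)
    [M.Finite] (τ : α → β)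
    (hweak : ∀ X ⊆ M.E, matroidRk N (τ '' X) ≤ matroidRk M X)
    (hsurj : τ '' M.E = N.E) :
    (∀ F, M.IsFlat F → N.IsFlat (N.closure (τ '' F))) ∧
    (∀ F₁ F₂, M.IsFlat F₁ → M.IsFlat F₂ → F₁ ⊆ F₂ →
      N.closure (τ '' F₁) ⊆ N.closure (τ '' F₂)) ∧
    (∀ G, N.IsFlat G → ∃ F, M.IsFlat F ∧ N.closure (τ '' F) = G) := by
  have : N.Finite := ⟨hsurj ▸ M.ground_finite.image τ⟩
  have heRk : ∀ X ⊆ M.E, N.eRk (τ '' X) ≤ M.eRk X := fun X hX ↦ by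
    have h := hweak X hX
    rw [Matroid.matroidRk_eq_toNat_eRk, Matroid.matroidRk_eq_toNat_eRk] at h
    rw [← ENat.natCast_toNat (N.isRkFinite_set _).eRk_lt_top.ne,
      ← ENat.natCast_toNat (M.isRkFinite_set X).eRk_lt_top.ne]
    exact_mod_cast h
  exact ⟨fun F _ ↦ N.isFlat_closure _,
    fun F₁ F₂ _ _ h ↦ N.closure_subset_closure (image_mono h),
    fun G hG ↦ Matroid.exists_isFlat_closure_image_eq hsurj heRk hG⟩

/-- If `τ` is a weak map between finite matroids `M` and `N` that is surjective onto the
ground set of `N`, then `F ↦ cl_N(τ(F))` is a monotone map from flats of `M` to flats of `N`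
that is surjective onto the flats of `N`. -/
theorem engstrom_surjective_poset_map {α β : Type*} (M : Matroid α) (N : Matroid β)
    [M.Finite] [N.Finite] (τ : α → β)
    (hmap : Set.MapsTo τ M.E N.E)
    (hweak : ∀ X ⊆ M.E, matroidRk N (τ '' X) ≤ matroidRk M X)
    (hsurj : τ '' M.E = N.E) :
    (∀ F, M.IsFlat F → N.IsFlat (N.closure (τ '' F))) ∧
    (∀ F₁ F₂, M.IsFlat F₁ → M.IsFlat F₂ → F₁ ⊆ F₂ →
      N.closure (τ '' F₁) ⊆ N.closure (τ '' F₂)) ∧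
    (∀ G, N.IsFlat G → ∃ F, M.IsFlat F ∧ N.closure (τ '' F) = G) :=
  engstrom_surjective_poset_map_general M N τ hweak hsurj
end

section
/- For all natural numbers i and k, the number of chains of k+1 distinct subsets of Fin i, totally ordered by strict inclusion, whose maximum element is the full set Fin i, equals the number of surjective functions f : Fin (i+1) → Fin (k+1) with f(0) = 0. (Both quantities equal k!·S(i+1,k+1), where S denotes the Stirling number of the second kind.) -/
namespace ChainSurj

variable {i k : ℕ}

def g (C : Finset (Finset (Fin i))) (x : Fin i) : ℕ := (C.filter (x ∉ ·)).card

def rk (C : Finset (Finset (Fin i))) (A : Finset (Fin i)) : ℕ := (C.filter (· ⊂ A)).card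

def setF (f : Fin (i+1) → Fin (k+1)) (j : Fin (k+1)) : Finset (Fin i) :=
  Finset.univ.filter (fun x => f x.succ ≤ j)

def Phi (f : Fin (i+1) → Fin (k+1)) : Finset (Finset (Fin i)) :=
  Finset.image (setF f) Finset.univ

def Psi (k : ℕ) (C : Finset (Finset (Fin i))) : Fin (i+1) → Fin (k+1) :=
  Fin.cases 0 (fun x => ⟨min (g C x) k, Nat.lt_succ_of_le (min_le_right _ _)⟩)

section ChainSide

variable {C : Finset (Finset (Fin i))}
  (hch : IsChain (· ⊂ ·) (C : Set (Finset (Fin i))))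
  (htop : (Finset.univ : Finset (Fin i)) ∈ C)
  (hcard : C.card = k + 1)

include hch in
lemma total {A B : Finset (Fin i)} (hA : A ∈ C) (hB : B ∈ C) : A ⊆ B ∨ B ⊆ A := by
  rcases eq_or_ne A B with rfl | hne
  · exact Or.inl le_rfl
  · rcases hch hA hB hne with h | h
    · exact Or.inl h.subset
    · exact Or.inr h.subset

include hch in
lemma mem_iff_g_le_rk {A : Finset (Fin i)} (hA : A ∈ C) (x : Fin i) :
    x ∈ A ↔ g C x ≤ rk C A := by
  constructor
  · intro hx
    apply Finset.card_le_card
    intro B hB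
    simp only [Finset.mem_filter] at hB ⊢
    refine ⟨hB.1, ?_⟩
    rcases total hch hB.1 hA with h | h
    · exact lt_of_le_of_ne h (by rintro rfl; exact hB.2 hx)
    · exact absurd (h hx) hB.2
  · intro hle
    by_contra hx
    have hsub : insert A (C.filter (· ⊂ A)) ⊆ C.filter (x ∉ ·) := by
      intro B hB
      rcases Finset.mem_insert.1 hB with rfl | hB
      · exact Finset.mem_filter.2 ⟨hA, hx⟩
      · simp only [Finset.mem_filter] at hB ⊢
        exact ⟨hB.1, fun hxB => hx (hB.2.subset hxB)⟩
    have hA' : A ∉ C.filter (· ⊂ A) := by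
      simp only [Finset.mem_filter, not_and]
      exact fun _ h => (Finset.ssubset_iff_subset_ne.1 h).2 rfl
    have := Finset.card_le_card hsub
    rw [Finset.card_insert_of_notMem hA'] at this
    unfold g rk at hle
    omega

include hch in
lemma rk_lt_rk {A B : Finset (Fin i)} (hA : A ∈ C) (h : A ⊂ B) :
    rk C A < rk C B := by
  have hsub : insert A (C.filter (· ⊂ A)) ⊆ C.filter (· ⊂ B) := by
    intro D hD
    rcases Finset.mem_insert.1 hD with rfl | hD
    · exact Finset.mem_filter.2 ⟨hA, h⟩
    · simp only [Finset.mem_filter] at hD ⊢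
      exact ⟨hD.1, hD.2.trans h⟩
  have hA' : A ∉ C.filter (· ⊂ A) := by
    simp only [Finset.mem_filter, not_and]
    exact fun _ h => (Finset.ssubset_iff_subset_ne.1 h).2 rfl
  have := Finset.card_le_card hsub
  rw [Finset.card_insert_of_notMem hA'] at this
  unfold rk
  omega

include hcard in
lemma rk_le {A : Finset (Fin i)} (hA : A ∈ C) : rk C A ≤ k := by
  have hsub : C.filter (· ⊂ A) ⊆ C.erase A := by
    intro B hB
    simp only [Finset.mem_filter] at hB
    exact Finset.mem_erase.2 ⟨hB.2.ne, hB.1⟩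
  have := Finset.card_le_card hsub
  rw [Finset.card_erase_of_mem hA, hcard] at this
  unfold rk
  omega

include hch htop hcard in
lemma g_le (x : Fin i) : g C x ≤ k :=
  le_trans ((mem_iff_g_le_rk hch htop x).1 (Finset.mem_univ x)) (rk_le hcard htop)

/-- rank as a map to `Fin (k+1)` is bijective. -/
noncomputable def rkFin (hcard : C.card = k + 1) (A : {A // A ∈ C}) : Fin (k + 1) :=
  ⟨rk C A.1, Nat.lt_succ_of_le (rk_le hcard A.2)⟩

include hch in
lemma rk_reflect {A B : Finset (Fin i)} (hA : A ∈ C) (hB : B ∈ C)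
    (h : rk C A < rk C B) : A ⊂ B := by
  rcases eq_or_ne A B with rfl | hne
  · omega
  rcases hch hA hB hne with h' | h'
  · exact h'
  · exact absurd (rk_lt_rk hch hB h') (by omega)

include hch htop in
lemma rkFin_bij : Function.Bijective (rkFin (C := C) hcard) := by
  rw [Fintype.bijective_iff_injective_and_card]
  constructor
  · rintro ⟨A, hA⟩ ⟨B, hB⟩ hAB
    simp only [rkFin, Fin.mk.injEq] at hAB
    rcases eq_or_ne A B with rfl | hne
    · rfl
    · rcases hch hA hB hne with h | h
      · exact absurd (rk_lt_rk hch hA h) (by omega)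
      · exact absurd (rk_lt_rk hch hB h) (by omega)
  · simp [Fintype.card_coe, hcard]

include hch htop hcard in
lemma psi_succ (x : Fin i) : (Psi k C x.succ : ℕ) = g C x := by
  simp [Psi, min_eq_left (g_le hch htop hcard x)]

lemma psi_zero : Psi k C 0 = 0 := rfl

include hch htop hcard in
lemma setF_psi {A : Finset (Fin i)} (hA : A ∈ C) :
    setF (Psi k C) ⟨rk C A, Nat.lt_succ_of_le (rk_le hcard hA)⟩ = A := by
  ext x
  simp only [setF, Finset.mem_filter, Finset.mem_univ, true_and]
  rw [Fin.le_def]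
  simp only [psi_succ hch htop hcard]
  exact ((mem_iff_g_le_rk hch hA x).symm)

include hch htop hcard in
lemma phi_psi : Phi (Psi k C) = C := by
  apply Finset.Subset.antisymm
  · intro S hS
    simp only [Phi, Finset.mem_image, Finset.mem_univ, true_and] at hS
    obtain ⟨j, rfl⟩ := hS
    obtain ⟨⟨A, hA⟩, hAj⟩ := (rkFin_bij hch htop hcard).2 j
    have : j = ⟨rk C A, Nat.lt_succ_of_le (rk_le hcard hA)⟩ := hAj.symm
    rw [this, setF_psi hch htop hcard hA]
    exact hA
  · intro A hA
    simp only [Phi, Finset.mem_image, Finset.mem_univ, true_and]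
    exact ⟨⟨rk C A, Nat.lt_succ_of_le (rk_le hcard hA)⟩, setF_psi hch htop hcard hA⟩

include hch htop hcard in
lemma psi_surj : Function.Surjective (Psi k C) := by
  intro j
  rcases eq_or_ne j 0 with rfl | hj
  · exact ⟨0, rfl⟩
  obtain ⟨⟨A, hA⟩, hAj⟩ := (rkFin_bij hch htop hcard).2 j
  have hjv : (j : ℕ) = rk C A := by rw [← hAj]; rfl
  have hApos : 1 ≤ rk C A := by
    have := Fin.pos_of_ne_zero hj
    omega
  obtain ⟨⟨B, hB⟩, hBj⟩ := (rkFin_bij hch htop hcard).2 ⟨rk C A - 1, by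
    have := rk_le hcard hA; omega⟩
  have hBv : rk C B = rk C A - 1 := congrArg Fin.val hBj
  have hBA : B ⊂ A := rk_reflect hch hB hA (by omega)
  obtain ⟨x, hxA, hxB⟩ := Finset.exists_of_ssubset hBA
  have h1 : g C x ≤ rk C A := (mem_iff_g_le_rk hch hA x).1 hxA
  have h2 : ¬ g C x ≤ rk C B := fun h => hxB ((mem_iff_g_le_rk hch hB x).2 h)
  refine ⟨x.succ, ?_⟩
  have : (Psi k C x.succ : ℕ) = (j : ℕ) := by
    rw [psi_succ hch htop hcard, hjv]; omega
  exact Fin.ext this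

end ChainSide

section SurjSide

variable {f : Fin (i+1) → Fin (k+1)} (hsurj : Function.Surjective f) (h0 : f 0 = 0)

include hsurj h0 in
lemma setF_ssubset {j j' : Fin (k+1)} (h : j < j') : setF f j ⊂ setF f j' := by
  rw [Finset.ssubset_iff_subset_ne]
  obtain ⟨y, hy⟩ := hsurj j'
  have hy0 : y ≠ 0 := by
    rintro rfl
    rw [h0] at hy
    have h1 : (j' : ℕ) = 0 := by rw [← hy]; rfl
    have h2 := Fin.lt_def.1 h
    omega
  obtain ⟨x, rfl⟩ := Fin.exists_succ_eq_of_ne_zero hy0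
  constructor
  · intro z hz
    simp only [setF, Finset.mem_filter, Finset.mem_univ, true_and] at hz ⊢
    exact hz.trans h.le
  · intro heq
    have hx' : x ∈ setF f j' := by
      simp [setF, hy]
    rw [← heq] at hx'
    simp only [setF, Finset.mem_filter, Finset.mem_univ, true_and, hy] at hx'
    exact absurd hx' (not_le.2 h)

include hsurj h0 in
lemma setF_injective : Function.Injective (setF f) := by
  intro j j' heq
  rcases lt_trichotomy j j' with h | h | h
  · exact absurd heq (setF_ssubset hsurj h0 h).ne
  · exact h
  · exact absurd heq.symm (setF_ssubset hsurj h0 h).ne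

include hsurj h0 in
lemma phi_card : (Phi f).card = k + 1 := by
  rw [Phi, Finset.card_image_of_injective _ (setF_injective hsurj h0)]
  simp

lemma phi_top : (Finset.univ : Finset (Fin i)) ∈ Phi f := by
  simp only [Phi, Finset.mem_image, Finset.mem_univ, true_and]
  refine ⟨Fin.last k, ?_⟩
  ext x
  simp [setF, Fin.le_last]

include hsurj h0 in
lemma phi_chain : IsChain (· ⊂ ·) ((Phi f : Finset (Finset (Fin i))) : Set (Finset (Fin i))) := by
  rintro A hA B hB hne
  simp only [Finset.coe_image, Set.mem_image, Phi, Finset.coe_univ, Set.mem_univ, true_and,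
    Finset.mem_coe, Finset.mem_image, Finset.mem_univ] at hA hB
  obtain ⟨j, rfl⟩ := hA
  obtain ⟨j', rfl⟩ := hB
  rcases lt_trichotomy j j' with h | h | h
  · exact Or.inl (setF_ssubset hsurj h0 h)
  · exact absurd (congrArg (setF f) h) hne
  · exact Or.inr (setF_ssubset hsurj h0 h)

include hsurj h0 in
lemma g_phi (x : Fin i) : g (Phi f) x = (f x.succ : ℕ) := by
  unfold g Phi
  rw [Finset.filter_image, Finset.card_image_of_injective _ (setF_injective hsurj h0)]
  have : (Finset.univ.filter fun j => x ∉ setF f j) = Finset.Iio (f x.succ) := by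
    ext j
    simp [setF, Finset.mem_Iio]
  rw [this, Fin.card_Iio]

include hsurj h0 in
lemma psi_phi : Psi k (Phi f) = f := by
  funext y
  induction y using Fin.cases with
  | zero => rw [psi_zero, h0]
  | succ x =>
      apply Fin.ext
      rw [psi_succ (phi_chain hsurj h0) phi_top (phi_card hsurj h0) x,
        g_phi hsurj h0]

end SurjSide

end ChainSurj

open ChainSurj in
/-- The number of chains of `k+1` distinct subsets of `Fin i`, totally ordered by strict
inclusion, whose maximum element is the full set, equals the number of surjective functions
`f : Fin (i+1) → Fin (k+1)` with `f 0 = 0` (both equal `k! · S(i+1, k+1)`). -/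
theorem chains_with_top_card_eq (i k : ℕ) :
    Nat.card {C : Finset (Finset (Fin i)) //
        C.card = k + 1 ∧ (Finset.univ : Finset (Fin i)) ∈ C ∧
        IsChain (· ⊂ ·) (C : Set (Finset (Fin i)))} =
    Nat.card {f : Fin (i + 1) → Fin (k + 1) // Function.Surjective f ∧ f 0 = 0} := by
  apply Nat.card_congr
  refine ⟨fun C => ⟨Psi k C.1, psi_surj C.2.2.2 C.2.2.1 C.2.1, psi_zero⟩,
    fun f => ⟨Phi f.1, phi_card f.2.1 f.2.2, phi_top, phi_chain f.2.1 f.2.2⟩,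
    ?_, ?_⟩
  · rintro ⟨C, hcard, htop, hch⟩
    exact Subtype.ext (phi_psi hch htop hcard)
  · rintro ⟨f, hsurj, h0⟩
    exact Subtype.ext (psi_phi hsurj h0)
end

section
/- For every natural number i, the sum over k from 0 to i of the number of surjective functions f : Fin (i+1) → Fin (k+1) with f(0) = 0 equals 2·F_i − [i = 0], where F_i is the i-th ordered Bell number and [i = 0] is 1 if i = 0 and 0 otherwise. (Equivalently, Σ_{k=0}^{i} k!·S(i+1,k+1) = 2·F_i − 0^i, where S denotes the Stirling number of the second kind and 0^0 = 1.) -/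
/-- The `i`-th ordered Bell (Fubini) number: the total number of surjective functions
from `Fin i` onto `Fin k`, summed over `0 ≤ k ≤ i`. -/
noncomputable def orderedBell (i : ℕ) : ℕ :=
  ∑ k ∈ Finset.range (i + 1), Nat.card {f : Fin i → Fin k // Function.Surjective f}

open Function

def pointedEquiv (n k : ℕ) :
    {f : Fin (n+1) → Fin (k+1) // Surjective f ∧ f 0 = 0} ≃
      ({f : Fin n → Fin (k+1) // Surjective f} ⊕ {f : Fin n → Fin k // Surjective f}) where
  toFun p :=
    if h : ∃ x : Fin n, p.1 x.succ = 0 then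
      Sum.inl ⟨fun x => p.1 x.succ, by
        intro y
        rcases p.2.1 y with ⟨x, hx⟩
        cases x using Fin.cases with
        | zero =>
          obtain ⟨z, hz⟩ := h
          refine ⟨z, ?_⟩
          show p.1 z.succ = y
          rw [hz, ← p.2.2, hx]
        | succ x => exact ⟨x, hx⟩⟩
    else
      Sum.inr ⟨fun x => (p.1 x.succ).pred (by push_neg at h; exact h x), by
        intro y
        rcases p.2.1 y.succ with ⟨x, hx⟩
        cases x using Fin.cases with
        | zero => rw [p.2.2] at hx; exact absurd hx.symm (Fin.succ_ne_zero y)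
        | succ x => exact ⟨x, by simp [hx]⟩⟩
  invFun s :=
    match s with
    | Sum.inl ⟨h, hh⟩ => ⟨Fin.cases 0 h, fun y => by
        rcases hh y with ⟨x, hx⟩
        exact ⟨x.succ, by simpa using hx⟩, by simp⟩
    | Sum.inr ⟨g, hg⟩ => ⟨Fin.cases 0 (fun x => (g x).succ), fun y => by
        cases y using Fin.cases with
        | zero => exact ⟨0, by simp⟩
        | succ y =>
          rcases hg y with ⟨x, hx⟩
          exact ⟨x.succ, by simp [hx]⟩, by simp⟩
  left_inv p := by
    obtain ⟨f, hf, h0⟩ := p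
    by_cases h : ∃ x : Fin n, f x.succ = 0
    · simp only [dif_pos h]
      apply Subtype.ext
      funext x
      cases x using Fin.cases with
      | zero => simp [h0]
      | succ x => simp
    · simp only [dif_neg h]
      apply Subtype.ext
      funext x
      cases x using Fin.cases with
      | zero => simp [h0]
      | succ x => simp
  right_inv s := by
    match s with
    | Sum.inl ⟨h, hh⟩ =>
      have hex : ∃ x : Fin n, (Fin.cases 0 h : Fin (n+1) → Fin (k+1)) x.succ = 0 := by
        rcases hh 0 with ⟨x, hx⟩
        exact ⟨x, by simpa using hx⟩
      simp only [dif_pos hex]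
      exact congrArg Sum.inl (Subtype.ext (funext fun x => by simp))
    | Sum.inr ⟨g, hg⟩ =>
      have hex : ¬ ∃ x : Fin n, (Fin.cases 0 (fun x => (g x).succ) : Fin (n+1) → Fin (k+1)) x.succ = 0 := by
        rintro ⟨x, hx⟩
        simp only [Fin.cases_succ] at hx
        exact (Fin.succ_ne_zero _) hx
      simp only [dif_neg hex]
      exact congrArg Sum.inr (Subtype.ext (funext fun x => by simp))

lemma card_surj_zero_of_lt {n k : ℕ} (h : n < k) :
    Nat.card {f : Fin n → Fin k // Surjective f} = 0 := by
  have : IsEmpty {f : Fin n → Fin k // Surjective f} := by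
    refine ⟨fun ⟨f, hf⟩ => ?_⟩
    have := Fintype.card_le_of_surjective f hf
    simp at this
    omega
  exact Nat.card_of_isEmpty

lemma card_surj_to_zero {n : ℕ} :
    Nat.card {f : Fin (n+1) → Fin 0 // Surjective f} = 0 := by
  have : IsEmpty {f : Fin (n+1) → Fin 0 // Surjective f} :=
    ⟨fun ⟨f, _⟩ => (f 0).elim0⟩
  exact Nat.card_of_isEmpty

lemma orderedBell_zero' : orderedBell 0 = 1 := by
  haveI : Unique {f : Fin 0 → Fin 0 // Surjective f} :=
    ⟨⟨⟨fun x => x.elim0, fun y => y.elim0⟩⟩, fun a => Subtype.ext (funext fun x => x.elim0)⟩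
  simp [orderedBell, Nat.card_unique]

lemma shift_sum (m : ℕ) :
    ∑ k ∈ Finset.range (m + 2), Nat.card {f : Fin (m+1) → Fin (k+1) // Surjective f} =
      orderedBell (m+1) := by
  have h1 := Finset.sum_range_succ'
    (fun k => Nat.card {f : Fin (m+1) → Fin k // Surjective f}) (m+2)
  have h2 := Finset.sum_range_succ
    (fun k => Nat.card {f : Fin (m+1) → Fin k // Surjective f}) (m+2)
  have h0 : Nat.card {f : Fin (m+1) → Fin 0 // Surjective f} = 0 := card_surj_to_zero
  have htop : Nat.card {f : Fin (m+1) → Fin (m+2) // Surjective f} = 0 :=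
    card_surj_zero_of_lt (by omega)
  simp only [h0, htop, add_zero] at h1 h2
  rw [orderedBell, ← h1, h2]

/-- `Σ_{k=0}^{i} k!·S(i+1,k+1) = 2·F_i − 0^i`, where the left-hand summand is realized as the
number of surjective functions `f : Fin (i+1) → Fin (k+1)` with `f 0 = 0`, and `F_i` is the
`i`-th ordered Bell number. -/
theorem sum_pointed_surjections_eq (i : ℕ) :
    ∑ k ∈ Finset.range (i + 1),
        Nat.card {f : Fin (i + 1) → Fin (k + 1) // Function.Surjective f ∧ f 0 = 0} =
      2 * orderedBell i - (if i = 0 then 1 else 0) := by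
  have key : ∀ k, Nat.card {f : Fin (i+1) → Fin (k+1) // Surjective f ∧ f 0 = 0}
      = Nat.card {f : Fin i → Fin (k+1) // Surjective f} +
        Nat.card {f : Fin i → Fin k // Surjective f} := fun k => by
    rw [Nat.card_congr (pointedEquiv i k), Nat.card_sum]
  simp only [key]
  rw [Finset.sum_add_distrib]
  have hOB : ∑ k ∈ Finset.range (i+1), Nat.card {f : Fin i → Fin k // Surjective f} =
      orderedBell i := rfl
  rw [hOB]
  cases i with
  | zero =>
    simp only [orderedBell_zero', if_pos rfl]
    rw [Finset.sum_range_one, card_surj_zero_of_lt (by omega)]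
    norm_num
  | succ m =>
    rw [shift_sum m, if_neg (by omega)]
    omega
end

section
/- Fix a natural number r ≥ 2. Define E(r,n) = 1 + Σ_{i=0}^{r} C(n,i)·(2·F_i − [i=0])·(3^{r−i} − 1) and S(r,n) = 1 + 2·Σ_{i=0}^{r−1} Σ_{k=0}^{r−i−1} C(n,i)·C(n−i−1,k), where C denotes the binomial coefficient, F_i is the i-th ordered Bell number, and [i=0] is 1 if i = 0 and 0 otherwise. Then the sequence n ↦ E(r,n)/S(r,n) (as real numbers) converges, as n → ∞, to F_{r−1}/2^{r−2}. -/
/-- `E(r,n)`, the total number of faces of the Engström representation of the rank `r`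
uniform matroid on `n` elements with indexing complex `S⁰`. -/
noncomputable def engstromFaces (r n : ℕ) : ℕ :=
  1 + ∑ i ∈ Finset.range (r + 1),
    Nat.choose n i * (2 * orderedBell i - (if i = 0 then 1 else 0)) * (3 ^ (r - i) - 1)

/-- `S(r,n)`, the total number of faces of the Folkman–Lawrence representation of the
rank `r` uniform oriented matroid on `n` elements. -/
def flFaces (r n : ℕ) : ℕ :=
  1 + 2 * ∑ i ∈ Finset.range r, ∑ k ∈ Finset.range (r - i),
    Nat.choose n i * Nat.choose (n - i - 1) k

/-!
For large `n` both counts are polynomials in `n` of degree `r - 1`, so the ratio tends to the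
ratio of their leading coefficients. Since `3 ^ (r - r) - 1 = 0`, the Engström sum stops at
`i = r - 1`, whose term `C(n, r-1) · 2F_{r-1} · 2` gives the leading coefficient
`4 F_{r-1} / (r-1)!`. In the Folkman–Lawrence sum, `C(n,i) C(n-i-1,k)` has degree `i + k`, so
only the terms with `i + k = r - 1` contribute, and they add up to `2 · 2^{r-1} / (r-1)!` by the
binomial theorem.
-/

open Filter Finset Asymptotics Topology

lemma isEquivalent_natCast_sub (c : ℕ) :
    (fun n : ℕ => ((n - c : ℕ) : ℝ)) ~[atTop] fun n => (n : ℝ) := by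
  have hsub : (fun n : ℕ => (n : ℝ) - c) ~[atTop] fun n => (n : ℝ) :=
    IsEquivalent.refl.sub_isLittleO <| isLittleO_const_left.mpr <|
      Or.inr <| tendsto_norm_atTop_atTop.comp tendsto_natCast_atTop_atTop
  refine hsub.congr_left ?_
  filter_upwards [eventually_ge_atTop c] with n hn
  rw [Nat.cast_sub hn]

lemma isEquivalent_choose_sub (c k : ℕ) :
    (fun n : ℕ => ((n - c).choose k : ℝ)) ~[atTop] fun n => (n : ℝ) ^ k / k.factorial :=
  ((isEquivalent_choose k).comp_tendsto (tendsto_sub_atTop_nat c)).trans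
    (((isEquivalent_natCast_sub c).pow k).div IsEquivalent.refl)

lemma tendsto_choose_sub_div_pow (c k : ℕ) :
    Tendsto (fun n : ℕ => ((n - c).choose k : ℝ) / (n : ℝ) ^ k) atTop
      (𝓝 (1 / k.factorial)) := by
  refine ((isEquivalent_choose_sub c k).div IsEquivalent.refl).symm.tendsto_nhds
    (tendsto_const_nhds.congr' ?_)
  filter_upwards [eventually_ne_atTop 0] with n hn
  simp [hn, div_div_cancel_left']

lemma tendsto_choose_mul_choose_sub_div_pow (i c k : ℕ) :
    Tendsto (fun n : ℕ => (n.choose i : ℝ) * ((n - c).choose k : ℝ) / (n : ℝ) ^ (i + k))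
      atTop (𝓝 (1 / (i.factorial * k.factorial))) := by
  have h := (tendsto_choose_sub_div_pow 0 i).mul (tendsto_choose_sub_div_pow c k)
  rw [one_div_mul_one_div] at h
  refine h.congr fun n => ?_
  rw [Nat.sub_zero, pow_add, mul_div_mul_comm]

lemma tendsto_div_pow_of_lt {f : ℕ → ℝ} {a : ℝ} {k d : ℕ}
    (hf : Tendsto (fun n => f n / (n : ℝ) ^ k) atTop (𝓝 a)) (hkd : k < d) :
    Tendsto (fun n => f n / (n : ℝ) ^ d) atTop (𝓝 0) := by
  have hpow := (tendsto_pow_div_pow_atTop_zero (𝕜 := ℝ) hkd).comp tendsto_natCast_atTop_atTop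
  refine (mul_zero a ▸ hf.mul hpow).congr' ?_
  filter_upwards [eventually_ne_atTop 0] with n hn
  simp only [Function.comp_apply]
  field_simp

lemma tendsto_sum_range_succ_div_pow {g : ℕ → ℕ → ℝ} {e : ℕ → ℕ} {a : ℝ} (m : ℕ)
    (hlow : ∀ j < m, ∃ b, Tendsto (fun n => g j n / (n : ℝ) ^ e j) atTop (𝓝 b))
    (he : ∀ j < m, e j < e m)
    (htop : Tendsto (fun n => g m n / (n : ℝ) ^ e m) atTop (𝓝 a)) :
    Tendsto (fun n => (∑ j ∈ range (m + 1), g j n) / (n : ℝ) ^ e m) atTop (𝓝 a) := by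
  have hsum : Tendsto (fun n => ∑ j ∈ range m, g j n / (n : ℝ) ^ e m) atTop (𝓝 0) := by
    rw [← sum_const_zero (s := range m)]
    refine tendsto_finsetSum _ fun j hj => ?_
    obtain ⟨b, hb⟩ := hlow j (mem_range.mp hj)
    exact tendsto_div_pow_of_lt hb (he j (mem_range.mp hj))
  simpa only [sum_range_succ, add_div, sum_div, zero_add] using hsum.add htop

lemma sum_range_one_div_factorial_mul_factorial (d : ℕ) :
    ∑ i ∈ range (d + 1), (1 : ℝ) / (i.factorial * (d - i).factorial) = 2 ^ d / d.factorial := by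
  have hchoose : ∀ i ∈ range (d + 1),
      (1 : ℝ) / (i.factorial * (d - i).factorial) = d.choose i / d.factorial := by
    intro i hi
    rw [Nat.cast_choose ℝ (Nat.lt_succ_iff.mp (mem_range.mp hi))]
    field_simp
  rw [sum_congr rfl hchoose, ← sum_div, ← Nat.cast_sum, Nat.sum_range_choose, Nat.cast_pow,
    Nat.cast_ofNat]

lemma engstromFaces_eq_sum_range (r n : ℕ) :
    engstromFaces r n = 1 + ∑ i ∈ range r,
      n.choose i * (2 * orderedBell i - (if i = 0 then 1 else 0)) * (3 ^ (r - i) - 1) := by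
  simp [engstromFaces, sum_range_succ]

lemma tendsto_engstromFaces_div_pow {d : ℕ} (hd : d ≠ 0) :
    Tendsto (fun n : ℕ => (engstromFaces (d + 1) n : ℝ) / (n : ℝ) ^ d) atTop
      (𝓝 (4 * orderedBell d / d.factorial)) := by
  set c : ℕ → ℝ := fun i =>
    ((2 * orderedBell i - (if i = 0 then 1 else 0)) * (3 ^ (d + 1 - i) - 1) : ℕ) with hc
  have hcd : c d = 4 * orderedBell d := by
    simp only [hc, hd, if_false, Nat.sub_zero, Nat.add_sub_cancel_left, pow_one]
    push_cast
    ring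
  have hterm : ∀ i, Tendsto (fun n : ℕ => (n.choose i : ℝ) * c i / (n : ℝ) ^ i) atTop
      (𝓝 (1 / i.factorial * c i)) := fun i =>
    ((tendsto_choose_sub_div_pow 0 i).mul_const (c i)).congr fun n => by
      rw [Nat.sub_zero, mul_div_right_comm]
  have hsum := tendsto_sum_range_succ_div_pow (e := id) d (fun i _ => ⟨_, hterm i⟩)
    (fun _ hi => hi) (hterm d)
  rw [show (4 * orderedBell d / d.factorial : ℝ) = 0 + 1 / d.factorial * c d by rw [hcd]; ring]
  refine ((tendsto_const_div_pow 1 d hd).add hsum).congr fun n => ?_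
  simp only [engstromFaces_eq_sum_range, mul_assoc, Nat.cast_add, Nat.cast_one, Nat.cast_sum,
    Nat.cast_mul, hc, add_div, id]

lemma tendsto_flFaces_div_pow {d : ℕ} (hd : d ≠ 0) :
    Tendsto (fun n : ℕ => (flFaces (d + 1) n : ℝ) / (n : ℝ) ^ d) atTop
      (𝓝 (2 * 2 ^ d / d.factorial)) := by
  have hrow : ∀ i ∈ range (d + 1), Tendsto (fun n : ℕ =>
      (∑ k ∈ range (d + 1 - i), (n.choose i : ℝ) * ((n - (i + 1)).choose k : ℝ)) / (n : ℝ) ^ d)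
      atTop (𝓝 (1 / (i.factorial * (d - i).factorial))) := by
    intro i hi
    have hid : i ≤ d := Nat.lt_succ_iff.mp (mem_range.mp hi)
    have h := tendsto_sum_range_succ_div_pow (e := (i + ·)) (d - i)
      (fun k _ => ⟨_, tendsto_choose_mul_choose_sub_div_pow i (i + 1) k⟩)
      (fun _ hk => by omega) (tendsto_choose_mul_choose_sub_div_pow i (i + 1) (d - i))
    rwa [Nat.add_sub_cancel' hid, ← Nat.sub_add_comm hid] at h
  have hrows := (tendsto_finsetSum _ hrow).const_mul 2
  rw [sum_range_one_div_factorial_mul_factorial, ← mul_div_assoc] at hrows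
  rw [← zero_add (2 * 2 ^ d / d.factorial : ℝ)]
  refine ((tendsto_const_div_pow 1 d hd).add hrows).congr fun n => ?_
  simp only [flFaces, Nat.cast_add, Nat.cast_one, Nat.cast_mul, Nat.cast_sum, Nat.cast_ofNat,
    add_div, mul_div_assoc, sum_div, Nat.sub_sub]

/-- For fixed `r ≥ 2`, the ratio `ρ(U_{r,n}) = E(r,n)/S(r,n)` tends to
`F_{r−1}/2^{r−2}` as `n → ∞`. -/
theorem ratio_tendsto (r : ℕ) (hr : 2 ≤ r) :
    Filter.Tendsto (fun n : ℕ => (engstromFaces r n : ℝ) / (flFaces r n : ℝ))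
      Filter.atTop (nhds ((orderedBell (r - 1) : ℝ) / 2 ^ (r - 2))) := by
  obtain ⟨d, rfl⟩ : ∃ d, r = d + 1 + 1 := ⟨r - 2, by omega⟩
  have hratio := (tendsto_engstromFaces_div_pow d.succ_ne_zero).div
    (tendsto_flFaces_div_pow d.succ_ne_zero) (by positivity)
  have hlim : (4 * orderedBell (d + 1) / (d + 1).factorial : ℝ) /
      (2 * 2 ^ (d + 1) / (d + 1).factorial) = orderedBell (d + 1) / 2 ^ d := by
    field_simp
    ring
  rw [hlim] at hratio
  refine hratio.congr' ?_
  filter_upwards [eventually_ne_atTop 0] with n hn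
  exact div_div_div_cancel_right₀ (pow_ne_zero _ (Nat.cast_ne_zero.mpr hn)) _ _
end

section
/- Let n and r be natural numbers with 1 ≤ r ≤ n, and let L(U_{r,n}) be the finite lattice consisting of all subsets A of Fin n with |A| < r together with the full set Fin n, ordered by inclusion. Let μ denote the Möbius function of this poset (with integer values). Then for every element A of L(U_{r,n}) with |A| = i < r, one has μ(A, Fin n) = (−1)^{r−i}·C(n−i−1, r−i−1), where C denotes the binomial coefficient. -/
/-!
Below an element `A` of size `i < r`, every interval `[A, Z]` with `|Z| < r` is a full Boolean
interval, so `μ(A, Z) = (-1)^|Z \ A|`. The defining recursion at the top then gives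
`μ(A, univ) = -∑_{A ⊆ Z, |Z| < r} (-1)^|Z \ A| = -∑_{j ≤ r-i-1} (-1)^j C(n-i, j)`, a truncated
alternating sum of binomial coefficients, which telescopes to `(-1)^(r-i) C(n-i-1, r-i-1)`.
-/

open Finset

structure IsMoebiusFun {α : Type*} [PartialOrder α] [LocallyFiniteOrder α] (μ : α → α → ℤ) :
    Prop where
  apply_self : ∀ a, μ a a = 1
  sum_Icc_eq_zero : ∀ a b, a < b → ∑ z ∈ Icc a b, μ a z = 0

namespace IsMoebiusFun

variable {α : Type*} [PartialOrder α] [LocallyFiniteOrder α] {μ : α → α → ℤ}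

theorem eq_neg_sum_Ico (hμ : IsMoebiusFun μ) {a b : α} (hab : a < b) :
    μ a b = -∑ z ∈ Ico a b, μ a z := by
  have := hμ.sum_Icc_eq_zero a b hab
  rw [← sum_Ico_add_eq_sum_Icc hab.le] at this
  linarith

end IsMoebiusFun

namespace Finset

variable {α : Type*} [DecidableEq α] {s t : Finset α}

theorem union_sdiff_cancel_left_of_mem_powerset_sdiff {v : Finset α}
    (hv : v ∈ (t \ s).powerset) : (s ∪ v) \ s = v :=
  union_sdiff_cancel_left (disjoint_of_subset_right (mem_powerset.1 hv) disjoint_sdiff)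

theorem sum_Icc_eq_sum_powerset_sdiff {M : Type*} [AddCommMonoid M] (h : s ⊆ t)
    (f : Finset α → M) : ∑ u ∈ Icc s t, f u = ∑ v ∈ (t \ s).powerset, f (s ∪ v) := by
  rw [Icc_eq_image_powerset h, sum_image]
  intro v hv w hw hvw
  rw [← union_sdiff_cancel_left_of_mem_powerset_sdiff hv,
    ← union_sdiff_cancel_left_of_mem_powerset_sdiff hw]
  exact congrArg (· \ s) hvw

theorem sum_Icc_neg_one_pow_card_sdiff (h : s ⊆ t) :
    ∑ u ∈ Icc s t, (-1 : ℤ) ^ #(u \ s) = if s = t then 1 else 0 := by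
  rw [sum_Icc_eq_sum_powerset_sdiff h,
    sum_congr rfl fun v hv => by rw [union_sdiff_cancel_left_of_mem_powerset_sdiff hv],
    sum_powerset_neg_one_pow_card]
  refine if_congr ?_ rfl rfl
  rw [sdiff_eq_empty_iff_subset]
  exact ⟨h.antisymm, fun hst => hst ▸ subset_rfl⟩

theorem sum_Icc_filter_card_lt_neg_one_pow (h : s ⊆ t) {r : ℕ} (hs : #s < r) (ht : r ≤ #t) :
    ∑ u ∈ Icc s t with #u < r, (-1 : ℤ) ^ #(u \ s) =
      (-1) ^ (r - #s - 1) * ((#t - #s - 1).choose (r - #s - 1) : ℤ) := by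
  set m := r - #s - 1
  have hcard : #(t \ s) = (#t - #s - 1) + 1 := by rw [card_sdiff_of_subset h]; omega
  calc ∑ u ∈ Icc s t with #u < r, (-1 : ℤ) ^ #(u \ s)
      = ∑ v ∈ (t \ s).powerset, if #v ≤ m then (-1 : ℤ) ^ #v else 0 := by
        rw [sum_filter, sum_Icc_eq_sum_powerset_sdiff h]
        refine sum_congr rfl fun v hv => ?_
        rw [union_sdiff_cancel_left_of_mem_powerset_sdiff hv,
          card_union_of_disjoint (disjoint_of_subset_right (mem_powerset.1 hv) disjoint_sdiff)]
        congr 1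
        simp only [eq_iff_iff]
        omega
    _ = ∑ j ∈ range (#(t \ s) + 1),
          if j ≤ m then (-1 : ℤ) ^ j * ((#(t \ s)).choose j : ℤ) else 0 := by
        refine (sum_powerset_apply_card fun j => if j ≤ m then (-1 : ℤ) ^ j else 0).trans
          (sum_congr rfl fun j _ => ?_)
        split_ifs <;> simp [mul_comm]
    _ = ∑ j ∈ range (m + 1), (-1 : ℤ) ^ j * ((#(t \ s)).choose j : ℤ) := by
        rw [← sum_filter]
        congr 1
        ext j
        simp only [mem_filter, mem_range]
        omega
    _ = (-1) ^ m * ((#t - #s - 1).choose m : ℤ) := by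
        rw [hcard, Int.alternating_sum_range_choose_eq_choose]

end Finset

namespace IsMoebiusFun

variable {α : Type*} [DecidableEq α] {P : Finset α → Prop} [DecidablePred P]
  {μ : Subtype P → Subtype P → ℤ}

theorem of_sum_filter_subset [Fintype α] (hrefl : ∀ p, μ p p = 1)
    (hsum : ∀ p q, p.1 ⊆ q.1 → p ≠ q →
      ∑ z ∈ univ.filter (fun z => p.1 ⊆ z.1 ∧ z.1 ⊆ q.1), μ p z = 0) :
    IsMoebiusFun μ := by
  refine ⟨hrefl, fun p q hpq => ?_⟩
  convert hsum p q hpq.le hpq.ne using 2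
  ext z
  simp [Subtype.coe_le_coe]

theorem apply_eq_neg_one_pow_card_sdiff (hμ : IsMoebiusFun μ) {a b : Subtype P}
    (hab : a ≤ b) (hP : ∀ u ∈ Icc a.1 b.1, P u) : μ a b = (-1) ^ #(b.1 \ a.1) := by
  induction b using WellFoundedLT.induction with
  | _ b ih =>
    rcases hab.eq_or_lt with rfl | hab
    · simp [hμ.apply_self]
    have hbool : ∑ z ∈ Icc a b, (-1 : ℤ) ^ #(z.1 \ a.1) = 0 := by
      rw [subtype_Icc_eq, sum_subtype_of_mem (fun u => (-1 : ℤ) ^ #(u \ a.1)) hP,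
        sum_Icc_neg_one_pow_card_sdiff hab.le, if_neg (Subtype.coe_injective.ne hab.ne)]
    rw [← sum_Ico_add_eq_sum_Icc hab.le] at hbool
    have hIco : ∑ z ∈ Ico a b, μ a z = ∑ z ∈ Ico a b, (-1 : ℤ) ^ #(z.1 \ a.1) := by
      refine sum_congr rfl fun z hz => ?_
      obtain ⟨haz, hzb⟩ := mem_Ico.1 hz
      exact ih z hzb haz fun u hu =>
        hP u (Icc_subset_Icc_right (Subtype.coe_le_coe.2 hzb.le) hu)
    rw [hμ.eq_neg_sum_Ico hab, hIco]
    linarith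

end IsMoebiusFun

abbrev UniformFlat (α : Type*) [Fintype α] (r : ℕ) := {A : Finset α // #A < r ∨ A = univ}

namespace UniformFlat

variable {α : Type*} [Fintype α] {r : ℕ}

theorem lt_univ_iff (hr : r ≤ Fintype.card α) {z : UniformFlat α r} :
    z < ⟨univ, Or.inr rfl⟩ ↔ #z.1 < r := by
  refine ⟨fun h => z.2.resolve_right (ssubset_univ_iff.1 h), fun h => ssubset_univ_iff.2 ?_⟩
  rintro hz
  rw [hz, card_univ] at h
  omega

theorem moebius_apply_univ [DecidableEq α] {μ : UniformFlat α r → UniformFlat α r → ℤ}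
    (hμ : IsMoebiusFun μ) (hr : r ≤ Fintype.card α) (a : UniformFlat α r) (ha : #a.1 < r) :
    μ a ⟨univ, Or.inr rfl⟩ =
      (-1) ^ (r - #a.1) * ((Fintype.card α - #a.1 - 1).choose (r - #a.1 - 1) : ℤ) := by
  set T : UniformFlat α r := ⟨univ, Or.inr rfl⟩
  have haT : a < T := (lt_univ_iff hr).2 ha
  have hIco : Ico a T = {u ∈ Icc a.1 univ | #u < r}.subtype _ := by
    ext z
    simp only [mem_Ico, mem_subtype, mem_filter, mem_Icc, subset_univ, and_true]
    exact and_congr Iff.rfl (lt_univ_iff hr)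
  calc μ a T = -∑ z ∈ Ico a T, μ a z := hμ.eq_neg_sum_Ico haT
    _ = -∑ z ∈ Ico a T, (-1 : ℤ) ^ #(z.1 \ a.1) := by
      congr 1
      refine sum_congr rfl fun z hz => hμ.apply_eq_neg_one_pow_card_sdiff (mem_Ico.1 hz).1
        fun u hu => Or.inl ?_
      exact (card_le_card (mem_Icc.1 hu).2).trans_lt ((lt_univ_iff hr).1 (mem_Ico.1 hz).2)
    _ = -∑ u ∈ Icc a.1 univ with #u < r, (-1 : ℤ) ^ #(u \ a.1) := by
      rw [hIco, sum_subtype_of_mem (fun u => (-1 : ℤ) ^ #(u \ a.1))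
        fun u hu => Or.inl (mem_filter.1 hu).2]
    _ = _ := by
      obtain ⟨m, hm⟩ : ∃ m, r - #a.1 = m + 1 := ⟨r - #a.1 - 1, by omega⟩
      rw [sum_Icc_filter_card_lt_neg_one_pow (subset_univ _) ha (card_univ (α := α) ▸ hr),
        card_univ, hm, Nat.add_sub_cancel, pow_succ]
      ring

end UniformFlat

theorem mobius_uniform_flats_top_general (n r : ℕ) (hrn : r ≤ n)
    (μ : {A : Finset (Fin n) // A.card < r ∨ A = Finset.univ} →
         {A : Finset (Fin n) // A.card < r ∨ A = Finset.univ} → ℤ)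
    (hrefl : ∀ p, μ p p = 1)
    (hsum : ∀ p q, p.1 ⊆ q.1 → p ≠ q →
      ∑ z ∈ Finset.univ.filter (fun z => p.1 ⊆ z.1 ∧ z.1 ⊆ q.1), μ p z = 0) :
    ∀ A : {A : Finset (Fin n) // A.card < r ∨ A = Finset.univ}, A.1.card < r →
      μ A ⟨Finset.univ, Or.inr rfl⟩ =
        (-1 : ℤ) ^ (r - A.1.card) * (Nat.choose (n - A.1.card - 1) (r - A.1.card - 1) : ℤ) := by
  intro A hA
  have hμ : IsMoebiusFun μ := .of_sum_filter_subset hrefl hsum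
  simpa using UniformFlat.moebius_apply_univ hμ (by simpa using hrn) A hA

/-- Let `L(U_{r,n})` (for `1 ≤ r ≤ n`) be the lattice of flats of the rank `r` uniform
matroid on `n` elements: all subsets of `Fin n` of cardinality `< r` together with the full
set, ordered by inclusion.  If `μ` is its (integer-valued) Möbius function, i.e.
`μ p p = 1` and `Σ_{p ⊆ z ⊆ q} μ p z = 0` whenever `p ⊊ q`, then for every element `A`
with `|A| = i < r`, one has `μ(A, Fin n) = (−1)^{r−i}·C(n−i−1, r−i−1)`. -/
theorem mobius_uniform_flats_top (n r : ℕ) (hr : 1 ≤ r) (hrn : r ≤ n)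
    (μ : {A : Finset (Fin n) // A.card < r ∨ A = Finset.univ} →
         {A : Finset (Fin n) // A.card < r ∨ A = Finset.univ} → ℤ)
    (hrefl : ∀ p, μ p p = 1)
    (hsum : ∀ p q, p.1 ⊆ q.1 → p ≠ q →
      ∑ z ∈ Finset.univ.filter (fun z => p.1 ⊆ z.1 ∧ z.1 ⊆ q.1), μ p z = 0) :
    ∀ A : {A : Finset (Fin n) // A.card < r ∨ A = Finset.univ}, A.1.card < r →
      μ A ⟨Finset.univ, Or.inr rfl⟩ =
        (-1 : ℤ) ^ (r - A.1.card) * (Nat.choose (n - A.1.card - 1) (r - A.1.card - 1) : ℤ) :=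
  mobius_uniform_flats_top_general n r hrn μ hrefl hsum
end

section
/- Let n and r be natural numbers with 1 ≤ r ≤ n, and let L(U_{r,n}) be the finite lattice consisting of all subsets A of Fin n with |A| < r together with the full set Fin n, ordered by inclusion, with integer-valued Möbius function μ. Then for every element A of L(U_{r,n}) with |A| = i < r, the sum Σ_{B ∈ L(U_{r,n}), A ⊆ B} |μ(A,B)| equals 2·Σ_{k=0}^{r−i−1} C(n−i−1,k), where C denotes the binomial coefficient. -/
open Finset

private lemma alt_sum_choose (N : ℕ) (m : ℕ) :
    ∑ k ∈ Finset.range (m + 1), (-1 : ℤ) ^ k * ((N + 1).choose k : ℤ)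
      = (-1) ^ m * (N.choose m : ℤ) := by
  induction m with
  | zero => simp
  | succ m ih =>
    rw [Finset.sum_range_succ, ih, Nat.choose_succ_succ]
    push_cast
    ring

private lemma two_sum_choose (N : ℕ) (m : ℕ) :
    ∑ k ∈ Finset.range (m + 1), (((N + 1).choose k : ℤ)) + (N.choose m : ℤ)
      = 2 * ∑ k ∈ Finset.range (m + 1), (N.choose k : ℤ) := by
  induction m with
  | zero => simp
  | succ m ih =>
    rw [Finset.sum_range_succ, Finset.sum_range_succ (f := fun k => (N.choose k : ℤ)),
      Nat.choose_succ_succ]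
    push_cast
    push_cast at ih
    linarith

private lemma sum_range_if {M K : ℕ} (hK : K ≤ M) (ψ : ℕ → ℤ) :
    ∑ j ∈ Finset.range M, (if j < K then ψ j else 0) = ∑ j ∈ Finset.range K, ψ j := by
  rw [← Finset.sum_filter]
  congr 1
  ext j
  simp only [Finset.mem_filter, Finset.mem_range]
  omega

private lemma sum_between {α : Type*} [DecidableEq α] [Fintype α]
    (A B : Finset α) (hAB : A ⊆ B) (h : Finset α → ℤ) :
    ∑ s ∈ Finset.univ.filter (fun s => A ⊆ s ∧ s ⊆ B), h s
      = ∑ t ∈ (B \ A).powerset, h (A ∪ t) := by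
  refine Finset.sum_nbij' (fun s => s \ A) (fun t => A ∪ t) ?_ ?_ ?_ ?_ ?_
  · intro s hs
    simp only [Finset.mem_filter, Finset.mem_univ, true_and] at hs
    exact Finset.mem_powerset.2 (Finset.sdiff_subset_sdiff hs.2 Finset.Subset.rfl)
  · intro t ht
    simp only [Finset.mem_powerset] at ht
    simp only [Finset.mem_filter, Finset.mem_univ, true_and]
    exact ⟨Finset.subset_union_left, Finset.union_subset hAB
      (ht.trans Finset.sdiff_subset)⟩
  · intro s hs
    simp only [Finset.mem_filter, Finset.mem_univ, true_and] at hs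
    exact Finset.union_sdiff_of_subset hs.1
  · intro t ht
    simp only [Finset.mem_powerset] at ht
    exact Finset.union_sdiff_cancel_left (Finset.sdiff_disjoint.mono_left ht).symm
  · intro s hs
    simp only [Finset.mem_filter, Finset.mem_univ, true_and] at hs
    rw [Finset.union_sdiff_of_subset hs.1]

/-- Let `L(U_{r,n})` (for `1 ≤ r ≤ n`) be the lattice of flats of the rank `r` uniform
matroid on `n` elements, with integer-valued Möbius function `μ`.  For every element `A`
with `|A| = i < r`, `Σ_{B ⊇ A} |μ(A,B)| = 2·Σ_{k=0}^{r−i−1} C(n−i−1,k)`. -/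
theorem mobius_uniform_flats_row_sum (n r : ℕ) (hr : 1 ≤ r) (hrn : r ≤ n)
    (μ : {A : Finset (Fin n) // A.card < r ∨ A = Finset.univ} →
         {A : Finset (Fin n) // A.card < r ∨ A = Finset.univ} → ℤ)
    (hrefl : ∀ p, μ p p = 1)
    (hsum : ∀ p q, p.1 ⊆ q.1 → p ≠ q →
      ∑ z ∈ Finset.univ.filter (fun z => p.1 ⊆ z.1 ∧ z.1 ⊆ q.1), μ p z = 0) :
    ∀ A : {A : Finset (Fin n) // A.card < r ∨ A = Finset.univ}, A.1.card < r →
      ∑ B ∈ Finset.univ.filter (fun B => A.1 ⊆ B.1), |μ A B| =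
        2 * ∑ k ∈ Finset.range (r - A.1.card), (Nat.choose (n - A.1.card - 1) k : ℤ) := by
  intro A hA
  classical
  set i := A.1.card with hidef
  have hin : i < n := lt_of_lt_of_le hA hrn
  have hcarduniv : (Finset.univ : Finset (Fin n)).card = n := by simp
  -- extension of μ A to all finsets
  set g : Finset (Fin n) → ℤ :=
    fun s => if h : s.card < r ∨ s = Finset.univ then μ A ⟨s, h⟩ else 0 with hgdef
  have hg : ∀ z : {A : Finset (Fin n) // A.card < r ∨ A = Finset.univ},
      μ A z = g z.1 := by
    rintro ⟨s, hs⟩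
    simp [hgdef, dif_pos hs]
  have hgwd : ∀ (s : Finset (Fin n)) (h : s.card < r ∨ s = Finset.univ),
      g s = μ A ⟨s, h⟩ := by
    intro s h
    simp [hgdef, dif_pos h]
  -- conversion of sums over the subtype to sums over finsets
  have hconv : ∀ (p : Finset (Fin n) → Prop) [DecidablePred p] (f : Finset (Fin n) → ℤ),
      ∑ z ∈ Finset.univ.filter
        (fun z : {A : Finset (Fin n) // A.card < r ∨ A = Finset.univ} => p z.1), f z.1
      = ∑ s ∈ Finset.univ.filter
          (fun s => p s ∧ (s.card < r ∨ s = Finset.univ)), f s := by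
    intro p _ f
    refine Finset.sum_bij (fun z _ => z.1) ?_ ?_ ?_ ?_
    · intro z hz
      simp only [Finset.mem_filter, Finset.mem_univ, true_and] at hz ⊢
      exact ⟨hz, z.2⟩
    · intro a ha b hb hab
      exact Subtype.ext hab
    · intro s hs
      simp only [Finset.mem_filter, Finset.mem_univ, true_and] at hs
      exact ⟨⟨s, hs.2⟩, by simp [hs.1], rfl⟩
    · intro z hz
      rfl
  -- Step A: values of μ below the top
  have key : ∀ m : ℕ, ∀ B : Finset (Fin n), B.card = m → B.card < r → A.1 ⊆ B →
      g B = (-1 : ℤ) ^ (B.card - i) := by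
    intro m
    induction m using Nat.strong_induction_on with
    | _ m ih =>
      intro B hBm hBr hAB
      by_cases hBA : B = A.1
      · subst hBA
        rw [hgwd A.1 A.2, Subtype.coe_eta, hrefl, hidef, Nat.sub_self, pow_zero]
      · have hne : A ≠ (⟨B, Or.inl hBr⟩ : {A : Finset (Fin n) // A.card < r ∨ A = Finset.univ}) := by
          intro h
          exact hBA (congrArg Subtype.val h).symm
        have h0 := hsum A ⟨B, Or.inl hBr⟩ hAB hne
        rw [Finset.sum_congr rfl (fun z _ => hg z)] at h0
        rw [hconv (fun s => A.1 ⊆ s ∧ s ⊆ B) g] at h0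
        have hfe : Finset.univ.filter
            (fun s => (A.1 ⊆ s ∧ s ⊆ B) ∧ (s.card < r ∨ s = Finset.univ))
            = Finset.univ.filter (fun s => A.1 ⊆ s ∧ s ⊆ B) := by
          apply Finset.filter_congr
          intro s _
          constructor
          · exact fun h => h.1
          · exact fun h => ⟨h, Or.inl (lt_of_le_of_lt (Finset.card_le_card h.2) hBr)⟩
        rw [hfe, sum_between A.1 B hAB g] at h0
        set b : Finset (Fin n) := B \ A.1 with hbdef
        have hbmem : b ∈ (B \ A.1).powerset := Finset.mem_powerset.2 Finset.Subset.rfl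
        have hbne : b ≠ ∅ := by
          intro h
          exact hBA (Finset.Subset.antisymm
            (by rw [← Finset.sdiff_eq_empty_iff_subset, ← hbdef]; exact h) hAB)
        have hcards : ∀ t ∈ (B \ A.1).powerset, (A.1 ∪ t).card = i + t.card := by
          intro t ht
          rw [Finset.mem_powerset] at ht
          rw [Finset.card_union_of_disjoint]
          exact (Finset.disjoint_sdiff.mono_right ht)
        have hAb : A.1 ∪ b = B := Finset.union_sdiff_of_subset hAB
        have hbcard : b.card = B.card - i := Finset.card_sdiff_of_subset hAB
        -- split off t = b
        rw [Finset.sum_eq_sum_sdiff_singleton_add hbmem (fun t => g (A.1 ∪ t))] at h0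
        have hrest : ∑ t ∈ (B \ A.1).powerset \ {b}, g (A.1 ∪ t)
            = ∑ t ∈ (B \ A.1).powerset \ {b}, (-1 : ℤ) ^ t.card := by
          apply Finset.sum_congr rfl
          intro t ht
          rw [Finset.mem_sdiff, Finset.mem_singleton] at ht
          have ht1 := Finset.mem_powerset.1 ht.1
          have htb : t ⊂ b := lt_of_le_of_ne ht1 ht.2
          have htc : t.card < b.card := Finset.card_lt_card htb
          have hcu : (A.1 ∪ t).card = i + t.card := hcards t ht.1
          have hlt : (A.1 ∪ t).card < m := by
            rw [hcu]
            omega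
          have hltr : (A.1 ∪ t).card < r := by omega
          rw [ih _ hlt (A.1 ∪ t) rfl hltr Finset.subset_union_left, hcu]
          congr 1
          omega
        rw [hrest] at h0
        have halt : ∑ t ∈ (B \ A.1).powerset, (-1 : ℤ) ^ t.card = 0 :=
          Finset.sum_powerset_neg_one_pow_card_of_nonempty
            (Finset.nonempty_iff_ne_empty.2 hbne)
        rw [Finset.sum_eq_sum_sdiff_singleton_add hbmem (fun t => (-1 : ℤ) ^ t.card)] at halt
        have hgb : g (A.1 ∪ b) = g B := by rw [hAb]
        rw [hgb] at h0
        have : g B = (-1 : ℤ) ^ b.card := by linarith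
        rw [this, hbcard]
  -- introduce m, N
  obtain ⟨m, hm⟩ : ∃ m, r - i = m + 1 := ⟨r - i - 1, by omega⟩
  obtain ⟨N, hN⟩ : ∃ N, n - i = N + 1 := ⟨n - i - 1, by omega⟩
  have hNm : m ≤ N := by omega
  have hsdu : (Finset.univ \ A.1).card = N + 1 := by
    rw [Finset.card_sdiff_of_subset (Finset.subset_univ _), hcarduniv, ← hidef, hN]
  -- generic evaluation of sums over proper supersets of A
  have hsuper : ∀ ψ : ℕ → ℤ,
      ∑ s ∈ Finset.univ.filter (fun s => A.1 ⊆ s ∧ s.card < r), ψ (s.card - i)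
        = ∑ j ∈ Finset.range (m + 1), ((N + 1).choose j : ℤ) * ψ j := by
    intro ψ
    have h1 : Finset.univ.filter (fun s => A.1 ⊆ s ∧ s.card < r)
        = (Finset.univ.filter (fun s : Finset (Fin n) => A.1 ⊆ s ∧ s ⊆ Finset.univ)).filter
            (fun s => s.card < r) := by
      ext s
      simp [Finset.subset_univ]
    rw [h1, Finset.sum_filter, sum_between A.1 Finset.univ (Finset.subset_univ _)]
    have h2 : ∀ t ∈ (Finset.univ \ A.1).powerset,
        (if (A.1 ∪ t).card < r then ψ ((A.1 ∪ t).card - i) else 0)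
          = (if t.card < m + 1 then ψ t.card else 0) := by
      intro t ht
      rw [Finset.mem_powerset] at ht
      have hdisj : Disjoint A.1 t :=
        (Finset.disjoint_sdiff.mono_right ht)
      have hcu : (A.1 ∪ t).card = i + t.card := Finset.card_union_of_disjoint hdisj
      rw [hcu]
      have : (i + t.card < r) ↔ (t.card < m + 1) := by omega
      simp only [Nat.add_sub_cancel_left]
      by_cases h : t.card < m + 1
      · rw [if_pos (this.2 h), if_pos h]
      · rw [if_neg (fun hh => h (this.1 hh)), if_neg h]
    rw [Finset.sum_congr rfl h2]
    rw [Finset.sum_powerset_apply_card (fun j => if j < m + 1 then ψ j else 0)]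
    rw [hsdu]
    have h3 : ∀ j ∈ Finset.range (N + 1 + 1),
        ((N + 1).choose j) • (if j < m + 1 then ψ j else 0)
          = (if j < m + 1 then ((N + 1).choose j : ℤ) * ψ j else 0) := by
      intro j _
      by_cases h : j < m + 1
      · simp [h, nsmul_eq_mul]
      · simp [h]
    rw [Finset.sum_congr rfl h3]
    exact sum_range_if (by omega) _
  -- Step B: value at the top
  have hAne : A ≠ (⟨Finset.univ, Or.inr rfl⟩ :
      {A : Finset (Fin n) // A.card < r ∨ A = Finset.univ}) := by
    intro h
    have : A.1 = Finset.univ := congrArg Subtype.val h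
    rw [this, hcarduniv] at hidef
    omega
  have htopsum := hsum A ⟨Finset.univ, Or.inr rfl⟩ (Finset.subset_univ _) hAne
  rw [Finset.sum_congr rfl (fun z _ => hg z)] at htopsum
  rw [hconv (fun s => A.1 ⊆ s ∧ s ⊆ Finset.univ) g] at htopsum
  -- split off the top element from the filter of all supersets
  have hsplit : ∀ f : Finset (Fin n) → ℤ,
      ∑ s ∈ Finset.univ.filter
        (fun s => (A.1 ⊆ s ∧ s ⊆ Finset.univ) ∧ (s.card < r ∨ s = Finset.univ)), f s
      = ∑ s ∈ Finset.univ.filter (fun s => A.1 ⊆ s ∧ s.card < r), f s + f Finset.univ := by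
    intro f
    have hmem : Finset.univ ∈ Finset.univ.filter
        (fun s : Finset (Fin n) =>
          (A.1 ⊆ s ∧ s ⊆ Finset.univ) ∧ (s.card < r ∨ s = Finset.univ)) := by
      simp [Finset.subset_univ]
    rw [Finset.sum_eq_sum_sdiff_singleton_add hmem f]
    congr 1
    apply Finset.sum_congr _ (fun _ _ => rfl)
    ext s
    simp only [Finset.mem_sdiff, Finset.mem_filter, Finset.mem_univ, true_and,
      Finset.mem_singleton]
    constructor
    · rintro ⟨⟨⟨h1, _⟩, h2⟩, h3⟩
      rcases h2 with h2 | h2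
      · exact ⟨h1, h2⟩
      · exact absurd h2 h3
    · rintro ⟨h1, h2⟩
      have hne : s ≠ Finset.univ := by
        intro h
        rw [h, hcarduniv] at h2
        omega
      exact ⟨⟨⟨h1, Finset.subset_univ _⟩, Or.inl h2⟩, hne⟩
  rw [hsplit g] at htopsum
  have hvals : ∀ s ∈ Finset.univ.filter (fun s => A.1 ⊆ s ∧ s.card < r),
      g s = (-1 : ℤ) ^ (s.card - i) := by
    intro s hs
    simp only [Finset.mem_filter, Finset.mem_univ, true_and] at hs
    exact key s.card s rfl hs.2 hs.1
  rw [Finset.sum_congr rfl hvals, hsuper (fun j => (-1 : ℤ) ^ j)] at htopsum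
  have halt2 : ∑ j ∈ Finset.range (m + 1), ((N + 1).choose j : ℤ) * (-1 : ℤ) ^ j
      = (-1) ^ m * (N.choose m : ℤ) := by
    rw [← alt_sum_choose N m]
    exact Finset.sum_congr rfl (fun j _ => by ring)
  rw [halt2] at htopsum
  have htopval : g Finset.univ = -((-1) ^ m * (N.choose m : ℤ)) := by linarith
  -- final computation
  rw [Finset.sum_congr rfl (fun z _ => by rw [hg z])]
  rw [hconv (fun s => A.1 ⊆ s) (fun s => |g s|)]
  have hfe2 : Finset.univ.filter
      (fun s : Finset (Fin n) => A.1 ⊆ s ∧ (s.card < r ∨ s = Finset.univ))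
      = Finset.univ.filter
        (fun s => (A.1 ⊆ s ∧ s ⊆ Finset.univ) ∧ (s.card < r ∨ s = Finset.univ)) := by
    ext s
    simp [Finset.subset_univ]
  rw [hfe2, hsplit (fun s => |g s|)]
  have habs : ∀ s ∈ Finset.univ.filter (fun s => A.1 ⊆ s ∧ s.card < r),
      |g s| = (fun j => (1 : ℤ)) (s.card - i) := by
    intro s hs
    simp only [Finset.mem_filter, Finset.mem_univ, true_and] at hs
    rw [key s.card s rfl hs.2 hs.1]
    simp [abs_pow]
  rw [Finset.sum_congr rfl habs, hsuper (fun _ => (1 : ℤ))]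
  have habstop : |g Finset.univ| = (N.choose m : ℤ) := by
    rw [htopval, abs_neg, abs_mul, abs_pow]
    simp
  rw [habstop]
  have hgoal : (n - A.1.card - 1 : ℕ) = N := by omega
  rw [hm, hgoal]
  simp only [mul_one]
  exact two_sum_choose N m
end

section
/- Let F_i denote the i-th ordered Bell number. Then the sequence i ↦ 2·F_i·(ln 2)^{i+1}/i! (as real numbers) converges to 1 as i → ∞; that is, F_i is asymptotic to i!/(2·(ln 2)^{i+1}). -/
/-!
Sorting the maps `Fin i → Fin k` by their image gives `k ^ i = ∑ⱼ (k choose j) Sᵢⱼ`, where `Sᵢⱼ`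
counts surjections `Fin i → Fin j`; since `∑ₖ (k choose j) / 2 ^ (k + 1) = 1`, this yields
`Fᵢ = ∑ₖ k ^ i / 2 ^ (k + 1)`. Thus `2 Fᵢ (log 2) ^ (i + 1) / i!` is the sum over the integers of
the Gamma density of shape `i + 1` and rate `log 2`, a unimodal function with integral `1`. For
such a function the sum over the integers is within twice its maximum of the integral, and the
maximum `log 2 · i ^ i e ^ (-i) / i!` is `O(i ^ (-1/2))` by Stirling's formula.
-/

open Finset Function
open scoped Nat

noncomputable def surjCount (i k : ℕ) : ℕ :=
  Nat.card {f : Fin i → Fin k // Surjective f}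

theorem surjCount_eq_zero_of_lt {i k : ℕ} (h : i < k) : surjCount i k = 0 := by
  rw [surjCount, Nat.card_eq_zero]
  left
  refine ⟨fun ⟨f, hf⟩ => ?_⟩
  have := Fintype.card_le_of_surjective f hf
  simp only [Fintype.card_fin] at this
  omega

theorem Nat.card_surjective_congr {α β γ : Type*} (e : β ≃ γ) :
    Nat.card {f : α → β // Surjective f} = Nat.card {f : α → γ // Surjective f} :=
  Nat.card_congr <| (Equiv.arrowCongr (Equiv.refl α) e).subtypeEquiv fun f =>
    (e.comp_surjective f).symm

def imageEqEquivSurjective {α β : Type*} [Fintype α] [DecidableEq β] (s : Finset β) :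
    {f : α → β // univ.image f = s} ≃ {g : α → s // Surjective g} where
  toFun := fun ⟨f, hf⟩ => ⟨fun x => ⟨f x, hf ▸ mem_image_of_mem f (mem_univ x)⟩, fun ⟨y, hy⟩ => by
    obtain ⟨x, -, hx⟩ := mem_image.1 (hf ▸ hy)
    exact ⟨x, Subtype.ext hx⟩⟩
  invFun g := ⟨fun x => g.1 x, by
    ext y
    simp only [mem_image, mem_univ, true_and]
    exact ⟨fun ⟨x, hx⟩ => hx ▸ (g.1 x).2, fun hy => (g.2 ⟨y, hy⟩).imp fun x hx => by rw [hx]⟩⟩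
  left_inv _ := rfl
  right_inv _ := rfl

theorem sum_surjCount_card_eq_pow (i : ℕ) {β : Type*} [Fintype β] [DecidableEq β] :
    ∑ s : Finset β, surjCount i #s = Fintype.card β ^ i := by
  have hfiber (s : Finset β) :
      #{f : Fin i → β | univ.image f = s} = surjCount i #s := by
    rw [← Fintype.card_subtype, ← Nat.card_eq_fintype_card,
      Nat.card_congr (imageEqEquivSurjective s),
      Nat.card_surjective_congr s.equivFin]
    rfl
  simp_rw [← hfiber]
  rw [← card_eq_sum_card_fiberwise (fun f _ => mem_univ _), card_univ, Fintype.card_fun,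
    Fintype.card_fin]

theorem sum_choose_mul_surjCount_eq_pow (i k : ℕ) :
    ∑ j ∈ range (i + 1), k.choose j * surjCount i j = k ^ i := by
  have hsum : ∑ j ∈ range (k + 1), k.choose j * surjCount i j = k ^ i := by
    rw [← Fintype.card_fin k, ← sum_surjCount_card_eq_pow, ← powerset_univ, sum_powerset]
    simp [sum_powersetCard]
  rw [← hsum]
  rcases le_total k i with h | h
  · refine (sum_subset (range_subset_range.2 (by omega)) fun j _ hjk => ?_).symm
    rw [Nat.choose_eq_zero_of_lt (by simp_all), zero_mul]
  · refine sum_subset (range_subset_range.2 (by omega)) fun j _ hji => ?_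
    rw [surjCount_eq_zero_of_lt (by simp_all), mul_zero]

theorem hasSum_choose_div_two_pow (j : ℕ) :
    HasSum (fun k : ℕ => (k.choose j : ℝ) / 2 ^ (k + 1)) 1 := by
  have hshift : HasSum (fun n : ℕ => ((n + j).choose j : ℝ) / 2 ^ (n + j + 1)) 1 := by
    have h := (hasSum_choose_mul_geometric_of_norm_lt_one j (r := (2⁻¹ : ℝ))
      (by norm_num)).div_const (2 ^ (j + 1))
    rw [show (1 : ℝ) - 2⁻¹ = 2⁻¹ by norm_num, inv_pow, one_div, inv_inv, div_self (by positivity)]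
      at h
    refine h.congr_fun fun n => ?_
    rw [inv_pow, pow_add, pow_add]
    field_simp
    ring
  have hzero : ∑ k ∈ range j, (k.choose j : ℝ) / 2 ^ (k + 1) = 0 :=
    sum_eq_zero fun k hk => by rw [Nat.choose_eq_zero_of_lt (mem_range.1 hk)]; simp
  rw [← hasSum_nat_add_iff' j, hzero, sub_zero]
  exact hshift

theorem hasSum_pow_div_two_pow (i : ℕ) :
    HasSum (fun k : ℕ => (k : ℝ) ^ i / 2 ^ (k + 1)) (orderedBell i) := by
  have hterm (k : ℕ) : (k : ℝ) ^ i / 2 ^ (k + 1)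
      = ∑ j ∈ range (i + 1), (surjCount i j : ℝ) * ((k.choose j : ℝ) / 2 ^ (k + 1)) := by
    rw [← Nat.cast_pow, ← sum_choose_mul_surjCount_eq_pow, Nat.cast_sum, sum_div]
    push_cast
    exact sum_congr rfl fun j _ => by ring
  simp_rw [hterm]
  have hBell : (orderedBell i : ℝ) = ∑ j ∈ range (i + 1), (surjCount i j : ℝ) * 1 := by
    simp [orderedBell, surjCount]
  rw [hBell]
  exact hasSum_sum fun j _ => (hasSum_choose_div_two_pow j).mul_left _

open Real Set Filter Topology MeasureTheory

theorem hasDerivAt_pow_mul_exp_neg (n : ℕ) (u : ℝ) :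
    HasDerivAt (fun u : ℝ => u ^ n * exp (-u)) ((n * u ^ (n - 1) - u ^ n) * exp (-u)) u :=
  ((hasDerivAt_pow n u).mul (hasDerivAt_neg u).exp).congr_deriv (by ring)

theorem monotoneOn_pow_mul_exp_neg (n : ℕ) :
    MonotoneOn (fun u : ℝ => u ^ n * exp (-u)) (Icc 0 n) := by
  refine monotoneOn_of_deriv_nonneg (convex_Icc _ _) (by fun_prop)
    (fun u _ => (hasDerivAt_pow_mul_exp_neg n u).differentiableAt.differentiableWithinAt)
    fun u hu => ?_
  rw [interior_Icc] at hu
  obtain ⟨hu0, hun⟩ := hu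
  rw [(hasDerivAt_pow_mul_exp_neg n u).deriv]
  cases n with
  | zero => simp at hun; linarith
  | succ m =>
    rw [Nat.add_sub_cancel, pow_succ', ← sub_mul, Nat.cast_succ] at *
    exact mul_nonneg (mul_nonneg (by linarith) (pow_nonneg hu0.le _)) (exp_pos _).le

theorem antitoneOn_pow_mul_exp_neg (n : ℕ) :
    AntitoneOn (fun u : ℝ => u ^ n * exp (-u)) (Ici n) := by
  refine antitoneOn_of_deriv_nonpos (convex_Ici _) (by fun_prop)
    (fun u _ => (hasDerivAt_pow_mul_exp_neg n u).differentiableAt.differentiableWithinAt)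
    fun u hu => ?_
  rw [interior_Ici, Set.mem_Ioi] at hu
  rw [(hasDerivAt_pow_mul_exp_neg n u).deriv]
  cases n with
  | zero => simp [(exp_pos _).le]
  | succ m =>
    rw [Nat.add_sub_cancel, pow_succ', ← sub_mul, Nat.cast_succ] at *
    have hu0 : 0 ≤ u := by linarith [m.cast_nonneg (α := ℝ)]
    exact mul_nonpos_of_nonpos_of_nonneg
      (mul_nonpos_of_nonpos_of_nonneg (by linarith) (pow_nonneg hu0 _)) (exp_pos _).le

theorem pow_mul_exp_neg_le (n : ℕ) {u : ℝ} (hu : 0 ≤ u) :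
    u ^ n * exp (-u) ≤ n ^ n * exp (-n) := by
  rcases le_total u n with h | h
  · exact monotoneOn_pow_mul_exp_neg n ⟨hu, h⟩ ⟨n.cast_nonneg, le_rfl⟩ h
  · exact antitoneOn_pow_mul_exp_neg n (mem_Ici.2 le_rfl) h h

theorem tendsto_pow_mul_exp_neg_div_factorial :
    Tendsto (fun n : ℕ => (n : ℝ) ^ n * exp (-n) / n !) atTop (𝓝 0) := by
  have hsqrt : Tendsto (fun n : ℕ => (√(2 * π * n))⁻¹) atTop (𝓝 0) :=
    tendsto_inv_atTop_zero.comp <| tendsto_sqrt_atTop.comp <|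
      tendsto_natCast_atTop_atTop.const_mul_atTop (by positivity)
  refine squeeze_zero' (Eventually.of_forall fun n => by positivity) ?_ hsqrt
  filter_upwards [eventually_ne_atTop 0] with n hn
  have hstir := Stirling.le_factorial_stirling n
  rw [div_pow, ← exp_nat_mul, mul_one, div_eq_mul_inv, ← exp_neg] at hstir
  have : 0 < √(2 * π * n) := by positivity
  rw [div_le_iff₀ (by positivity), inv_mul_eq_div, le_div_iff₀ this]
  linarith

theorem MonotoneOn.intervalIntegrable_of_Icc {f : ℝ → ℝ} {a b : ℝ} (hab : a ≤ b)
    (hf : MonotoneOn f (Icc a b)) : IntervalIntegrable f volume a b :=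
  MonotoneOn.intervalIntegrable (by rwa [uIcc_of_le hab])

theorem AntitoneOn.intervalIntegrable_of_Icc {f : ℝ → ℝ} {a b : ℝ} (hab : a ≤ b)
    (hf : AntitoneOn f (Icc a b)) : IntervalIntegrable f volume a b :=
  AntitoneOn.intervalIntegrable (by rwa [uIcc_of_le hab])

theorem MonotoneOn.integral_sub_sum_Ico_le {f : ℝ → ℝ} {a b : ℕ} (hab : a ≤ b)
    (hf : MonotoneOn f (Icc a b)) :
    (∫ x in a..b, f x) - ∑ k ∈ Ico a b, f k ≤ f b - f a := by
  rw [← sum_Ico_sub (fun k : ℕ => f k) hab, sum_sub_distrib]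
  exact sub_le_sub_right (hf.integral_le_sum_Ico hab) _

theorem AntitoneOn.sum_Ico_sub_integral_le {f : ℝ → ℝ} {a b : ℕ} (hab : a ≤ b)
    (hf : AntitoneOn f (Icc a b)) :
    ∑ k ∈ Ico a b, f k - ∫ x in a..b, f x ≤ f a - f b := by
  rw [← neg_sub (f b), ← sum_Ico_sub (fun k : ℕ => f k) hab, sum_sub_distrib, neg_sub]
  exact sub_le_sub_left (hf.sum_le_integral_Ico hab) _

theorem abs_sum_range_sub_integral_le_of_unimodal {f : ℝ → ℝ} {c M : ℝ} (hc : 0 ≤ c)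
    (hmono : MonotoneOn f (Icc 0 c)) (hanti : AntitoneOn f (Ici c))
    (hf0 : ∀ x, 0 ≤ x → 0 ≤ f x) (hfM : ∀ x, 0 ≤ x → f x ≤ M) {N : ℕ} (hN : c < N) :
    |∑ k ∈ range N, f k - ∫ x in (0 : ℝ)..N, f x| ≤ 2 * M := by
  -- Split `[0, N]` at the unit interval `[q, q + 1]` containing the mode: there the error is at
  -- most `M`, and on either side it telescopes to a difference of two values in `[0, M]`.
  obtain ⟨q, hqc, hcq⟩ : ∃ q : ℕ, (q : ℝ) ≤ c ∧ c ≤ (q + 1 : ℕ) :=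
    ⟨⌊c⌋₊, Nat.floor_le hc, by push_cast; exact (Nat.lt_floor_add_one c).le⟩
  have hqN : q + 1 ≤ N := by exact_mod_cast hqc.trans_lt hN
  have hq : (q : ℝ) ≤ (q + 1 : ℕ) := hqc.trans hcq
  have hmono' : MonotoneOn f (Icc (0 : ℕ) q) := hmono.mono (Icc_subset_Icc (by simp) hqc)
  have hanti' : AntitoneOn f (Icc (q + 1 : ℕ) N) := hanti.mono fun x hx => hcq.trans hx.1
  have hpeak : IntervalIntegrable f volume q (q + 1 : ℕ) :=
    (hmono.mono (Icc_subset_Icc_left q.cast_nonneg)).intervalIntegrable_of_Icc hqc |>.trans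
      ((hanti.mono Icc_subset_Ici_self).intervalIntegrable_of_Icc hcq)
  have hsum : ∑ k ∈ range N, f k = ∑ k ∈ Ico 0 q, f k + f q + ∑ k ∈ Ico (q + 1) N, f k := by
    rw [← sum_range_add_sum_Ico _ (by omega : q ≤ N), sum_eq_sum_Ico_succ_bot (by omega),
      range_eq_Ico, add_assoc]
  have hint : ∫ x in ((0 : ℕ) : ℝ)..N, f x = (∫ x in (0 : ℕ)..q, f x)
      + (∫ x in (q : ℝ)..(q + 1 : ℕ), f x) + ∫ x in (q + 1 : ℕ)..(N : ℝ), f x := by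
    have hleft := hmono'.intervalIntegrable_of_Icc (Nat.cast_le.2 q.zero_le)
    have hright := hanti'.intervalIntegrable_of_Icc (Nat.cast_le.2 hqN)
    rw [intervalIntegral.integral_add_adjacent_intervals hleft hpeak,
      intervalIntegral.integral_add_adjacent_intervals (hleft.trans hpeak) hright]
  have hpeak_nonneg : 0 ≤ ∫ x in (q : ℝ)..(q + 1 : ℕ), f x :=
    intervalIntegral.integral_nonneg hq fun x hx => hf0 x (q.cast_nonneg.trans hx.1)
  have hpeak_le : ∫ x in (q : ℝ)..(q + 1 : ℕ), f x ≤ M := by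
    simpa using intervalIntegral.integral_mono_on hq hpeak intervalIntegrable_const
      fun x hx => hfM x (q.cast_nonneg.trans hx.1)
  have hleft_low := hmono'.sum_le_integral_Ico q.zero_le
  have hleft_up := hmono'.integral_sub_sum_Ico_le q.zero_le
  have hright_low := hanti'.integral_le_sum_Ico hqN
  have hright_up := hanti'.sum_Ico_sub_integral_le hqN
  have := hf0 0 le_rfl
  have := hf0 N N.cast_nonneg
  have := hfM q q.cast_nonneg
  have := hfM (q + 1 : ℕ) (Nat.cast_nonneg _)
  rw [abs_le, hsum]
  simp only [Nat.cast_zero] at *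
  rw [hint]
  constructor <;> linarith

theorem abs_sub_integral_le_of_unimodal {f : ℝ → ℝ} {c M S : ℝ} (hc : 0 ≤ c)
    (hmono : MonotoneOn f (Icc 0 c)) (hanti : AntitoneOn f (Ici c))
    (hf0 : ∀ x, 0 ≤ x → 0 ≤ f x) (hfM : ∀ x, 0 ≤ x → f x ≤ M)
    (hf : IntegrableOn f (Ioi 0)) (hS : HasSum (fun k : ℕ => f k) S) :
    |S - ∫ x in Ioi 0, f x| ≤ 2 * M := by
  have hlim : Tendsto (fun N : ℕ => |∑ k ∈ range N, f k - ∫ x in (0 : ℝ)..N, f x|) atTop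
      (𝓝 |S - ∫ x in Ioi 0, f x|) :=
    (hS.tendsto_sum_nat.sub
      (intervalIntegral_tendsto_integral_Ioi 0 hf tendsto_natCast_atTop_atTop)).abs
  refine le_of_tendsto hlim ?_
  filter_upwards [tendsto_natCast_atTop_atTop.eventually_gt_atTop c] with N hN
  exact abs_sum_range_sub_integral_le_of_unimodal hc hmono hanti hf0 hfM hN

noncomputable def erlangDensity (n : ℕ) (r t : ℝ) : ℝ :=
  r ^ (n + 1) / n ! * (t ^ n * exp (-(r * t)))

theorem erlangDensity_eq (n : ℕ) (r t : ℝ) :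
    erlangDensity n r t = r / n ! * ((r * t) ^ n * exp (-(r * t))) := by
  rw [erlangDensity, mul_pow, pow_succ]
  ring

section

variable {n : ℕ} {r : ℝ}

theorem erlangDensity_nonneg (hr : 0 ≤ r) {t : ℝ} (ht : 0 ≤ t) : 0 ≤ erlangDensity n r t := by
  unfold erlangDensity; positivity

theorem erlangDensity_le (hr : 0 ≤ r) {t : ℝ} (ht : 0 ≤ t) :
    erlangDensity n r t ≤ r * (n ^ n * exp (-n) / n !) := calc
  erlangDensity n r t = r / n ! * ((r * t) ^ n * exp (-(r * t))) := erlangDensity_eq n r t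
  _ ≤ r / n ! * (n ^ n * exp (-n)) :=
    mul_le_mul_of_nonneg_left (pow_mul_exp_neg_le n (by positivity)) (by positivity)
  _ = r * (n ^ n * exp (-n) / n !) := by ring

theorem monotoneOn_erlangDensity (hr : 0 < r) :
    MonotoneOn (erlangDensity n r) (Icc 0 (n / r)) := by
  intro s hs t ht hst
  simp only [erlangDensity_eq]
  have hmaps : MapsTo (r * ·) (Icc 0 (n / r)) (Icc 0 n) := fun x hx =>
    ⟨by have := hx.1; positivity, by have := hx.2; rwa [le_div_iff₀' hr] at this⟩
  exact mul_le_mul_of_nonneg_left (monotoneOn_pow_mul_exp_neg n (hmaps hs) (hmaps ht)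
    (mul_le_mul_of_nonneg_left hst hr.le)) (by positivity)

theorem antitoneOn_erlangDensity (hr : 0 < r) :
    AntitoneOn (erlangDensity n r) (Ici (n / r)) := by
  intro s hs t ht hst
  simp only [erlangDensity_eq]
  have hmaps : MapsTo (r * ·) (Ici (n / r)) (Ici n) := fun x hx => by
    have := hx.out; rwa [div_le_iff₀' hr] at this
  exact mul_le_mul_of_nonneg_left (antitoneOn_pow_mul_exp_neg n (hmaps hs) (hmaps ht)
    (mul_le_mul_of_nonneg_left hst hr.le)) (by positivity)

theorem integrableOn_erlangDensity (hr : 0 < r) : IntegrableOn (erlangDensity n r) (Ioi 0) := by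
  have h := (integrableOn_rpow_mul_exp_neg_mul_rpow (s := n) (p := 1)
    (by linarith [n.cast_nonneg (α := ℝ)]) one_pos hr).const_mul (r ^ (n + 1) / n !)
  refine IntegrableOn.congr_fun h (fun t _ => ?_) measurableSet_Ioi
  simp [erlangDensity]

theorem integral_erlangDensity (hr : 0 < r) : ∫ t in Ioi 0, erlangDensity n r t = 1 := by
  have h := integral_rpow_mul_exp_neg_mul_Ioi (a := n + 1) (by positivity) hr
  rw [add_sub_cancel_right, Gamma_nat_eq_factorial, ← Nat.cast_succ, rpow_natCast] at h
  simp_rw [rpow_natCast] at h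
  simp only [erlangDensity, integral_const_mul, h, Nat.succ_eq_add_one, one_div, inv_pow]
  field_simp

end

theorem hasSum_erlangDensity_log_two (i : ℕ) :
    HasSum (fun k : ℕ => erlangDensity i (log 2) k)
      (2 * orderedBell i * log 2 ^ (i + 1) / i !) := by
  have h := (hasSum_pow_div_two_pow i).mul_left (2 * log 2 ^ (i + 1) / i !)
  rw [← mul_div_right_comm, mul_right_comm] at h
  refine h.congr_fun fun k => ?_
  rw [erlangDensity, exp_neg, mul_comm (log 2), exp_nat_mul, exp_log two_pos, pow_succ]
  field_simp
  ring

/-- Barthélémy's asymptotic for the ordered Bell numbers: `F_i ~ i!/(2·(ln 2)^{i+1})`,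
i.e. `2·F_i·(ln 2)^{i+1}/i! → 1` as `i → ∞`. -/
theorem orderedBell_asymptotics :
    Filter.Tendsto
      (fun i : ℕ => 2 * (orderedBell i : ℝ) * (Real.log 2) ^ (i + 1) / (Nat.factorial i : ℝ))
      Filter.atTop (nhds 1) := by
  have hlog : 0 < log 2 := log_pos one_lt_two
  have hbound (i : ℕ) : |2 * (orderedBell i : ℝ) * log 2 ^ (i + 1) / (i ! : ℝ) - 1|
      ≤ 2 * (log 2 * (i ^ i * exp (-i) / i !)) := by
    rw [← integral_erlangDensity (n := i) hlog]
    exact abs_sub_integral_le_of_unimodal (by positivity) (monotoneOn_erlangDensity hlog)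
      (antitoneOn_erlangDensity hlog) (fun t => erlangDensity_nonneg hlog.le)
      (fun t => erlangDensity_le hlog.le) (integrableOn_erlangDensity hlog)
      (hasSum_erlangDensity_log_two i)
  have hmax : Tendsto (fun i : ℕ => 2 * (log 2 * (i ^ i * exp (-i) / i !))) atTop (𝓝 0) := by
    simpa using (tendsto_pow_mul_exp_neg_div_factorial.const_mul (log 2)).const_mul 2
  exact tendsto_iff_norm_sub_tendsto_zero.2 (squeeze_zero (fun _ => norm_nonneg _) hbound hmax)
end

section
/- Fix a natural number r ≥ 2. Define E'(r,n) = 1 + Σ_{i=0}^{r} C(n,i)·(2·F_i − [i=0])·2·(r−i), where C(n,i) is the binomial coefficient, F_i is the i-th ordered Bell number, and [i=0] is 1 if i = 0 and 0 otherwise. Then there exists a polynomial P with rational coefficients such that P(n) = E'(r,n) for every natural number n, P has degree r − 1, and the leading coefficient of P is 4·F_{r−1}/(r−1)!; in particular it has the same degree and leading coefficient as the polynomial n ↦ 1 + Σ_{i=0}^{r} C(n,i)·(2·F_i − [i=0])·(3^{r−i} − 1). -/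
/-- `E'(r,n)`, the total face count of the modified Engström representation of the rank `r`
uniform matroid on `n` elements, where each join factor `D_{S⁰}(p)` is replaced by the
standard cell structure on `S^{r−i−1}` with two cells in each dimension. -/
noncomputable def engstromFaces' (r n : ℕ) : ℕ :=
  1 + ∑ i ∈ Finset.range (r + 1),
    Nat.choose n i * (2 * orderedBell i - (if i = 0 then 1 else 0)) * (2 * (r - i))

/-!
Since `n.choose i = (descPochhammer ℚ i).eval n / i!`, an expression `1 + ∑_{i ≤ r} c_i (n choose i)`
is a polynomial in `n` of degree the largest `i` with `c_i ≠ 0`. In both face counts the term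
`i = r` vanishes (it carries the empty sphere `S^{-1}`), so the top term is `i = r - 1`, whose
coefficient `2 F_{r-1} · 2` only sees the two cells of `S⁰`, the same in both cell structures.
-/

lemma orderedBell_pos (i : ℕ) : 0 < orderedBell i := by
  have : Nonempty {f : Fin i → Fin i // Function.Surjective f} := ⟨⟨id, Function.surjective_id⟩⟩
  exact Nat.card_pos.trans_le <| Finset.single_le_sum
    (f := fun k => Nat.card {f : Fin i → Fin k // Function.Surjective f})
    (fun _ _ => Nat.zero_le _) (Finset.self_mem_range_succ i)

open Polynomial Finset Nat

section BinomialPoly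

variable {K : Type*} [Field K]

noncomputable def binomialPoly (c : ℕ → K) (m : ℕ) : K[X] :=
  ∑ i ∈ range m, (c i / i !) • descPochhammer K i

lemma eval_binomialPoly [CharZero K] (c : ℕ → K) (m n : ℕ) :
    (binomialPoly c m).eval (n : K) = ∑ i ∈ range m, c i * n.choose i := by
  rw [binomialPoly, eval_finsetSum]
  refine sum_congr rfl fun i _ => ?_
  rw [eval_smul, smul_eq_mul, Nat.cast_choose_eq_descPochhammer_div]
  ring

lemma degree_binomialPoly_lt (c : ℕ → K) (m : ℕ) : (binomialPoly c m).degree < m :=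
  mem_degreeLT.1 <| Submodule.sum_mem _ fun i hi => mem_degreeLT.2 <|
    (degree_smul_le _ _).trans_lt <| degree_le_natDegree.trans_lt <| by
      rw [descPochhammer_natDegree]; exact_mod_cast mem_range.1 hi

lemma degree_binomialPoly_lt_degree_top [CharZero K] {c : ℕ → K} {m : ℕ} (hc : c m ≠ 0) :
    (binomialPoly c m).degree < ((c m / m !) • descPochhammer K m).degree := by
  rw [smul_eq_C_mul, degree_C_mul (div_ne_zero hc (by exact_mod_cast m.factorial_ne_zero)),
    degree_eq_natDegree (monic_descPochhammer K m).ne_zero, descPochhammer_natDegree]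
  exact degree_binomialPoly_lt c m

lemma natDegree_binomialPoly_succ [CharZero K] {c : ℕ → K} {m : ℕ} (hc : c m ≠ 0) :
    (binomialPoly c (m + 1)).natDegree = m := by
  rw [binomialPoly, sum_range_succ, ← binomialPoly,
    natDegree_add_eq_right_of_degree_lt (degree_binomialPoly_lt_degree_top hc), smul_eq_C_mul,
    natDegree_C_mul (div_ne_zero hc (by exact_mod_cast m.factorial_ne_zero)),
    descPochhammer_natDegree]

lemma leadingCoeff_binomialPoly_succ [CharZero K] {c : ℕ → K} {m : ℕ} (hc : c m ≠ 0) :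
    (binomialPoly c (m + 1)).leadingCoeff = c m / m ! := by
  rw [binomialPoly, sum_range_succ, ← binomialPoly,
    leadingCoeff_add_of_degree_lt (degree_binomialPoly_lt_degree_top hc), smul_eq_C_mul,
    leadingCoeff_mul, leadingCoeff_C, (monic_descPochhammer K m).leadingCoeff, mul_one]

end BinomialPoly

noncomputable def engstromCoeff (w : ℕ → ℕ) (r i : ℕ) : ℕ :=
  (2 * orderedBell i - if i = 0 then 1 else 0) * w (r - i)

/-- The face count when each sphere `S^{k-1}` carries a cell structure with `w k` cells:
`engstromFaces'` and `engstromFaces` are the cases `w k = 2k` and `w k = 3^k - 1`. -/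
noncomputable def engstromFacesOf (w : ℕ → ℕ) (r n : ℕ) : ℕ :=
  1 + ∑ i ∈ range (r + 1), n.choose i * (2 * orderedBell i - if i = 0 then 1 else 0) * w (r - i)

lemma engstromCoeff_succ_self (w : ℕ → ℕ) {m : ℕ} (hm : m ≠ 0) :
    engstromCoeff w (m + 1) m = 2 * orderedBell m * w 1 := by
  simp [engstromCoeff, hm]

lemma engstromFacesOf_eq_sum (w : ℕ → ℕ) (hw : w 0 = 0) (r n : ℕ) :
    (engstromFacesOf w r n : ℚ) = 1 + ∑ i ∈ range r, (engstromCoeff w r i : ℚ) * n.choose i := by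
  rw [engstromFacesOf, sum_range_succ, Nat.sub_self, hw, mul_zero, add_zero]
  push_cast
  exact congrArg (1 + ·) <| sum_congr rfl fun i _ => by rw [engstromCoeff]; push_cast; ring

lemma exists_polynomial_engstromFacesOf (w : ℕ → ℕ) (hw0 : w 0 = 0) (hw1 : w 1 ≠ 0) {r : ℕ}
    (hr : 2 ≤ r) :
    ∃ P : ℚ[X], (∀ n : ℕ, P.eval (n : ℚ) = engstromFacesOf w r n) ∧ P.natDegree = r - 1 ∧
      P.leadingCoeff = 2 * orderedBell (r - 1) * w 1 / (r - 1)! := by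
  obtain ⟨m, rfl⟩ : ∃ m, r = m + 1 := ⟨r - 1, by omega⟩
  set c : ℕ → ℚ := fun i => engstromCoeff w (m + 1) i
  have hc : c m = 2 * orderedBell m * w 1 := by
    simp only [c, engstromCoeff_succ_self w (show m ≠ 0 by omega)]
    push_cast
    rfl
  have hc0 : c m ≠ 0 := by
    rw [hc]; have := orderedBell_pos m; positivity
  have hdeg := natDegree_binomialPoly_succ hc0
  refine ⟨C 1 + binomialPoly c (m + 1), fun n => ?_, ?_, ?_⟩
  · rw [eval_add, eval_C, eval_binomialPoly, engstromFacesOf_eq_sum w hw0]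
  · rw [natDegree_C_add, hdeg, Nat.add_sub_cancel]
  · have hpos : 0 < (binomialPoly c (m + 1)).degree :=
      natDegree_pos_iff_degree_pos.1 (by omega)
    rw [leadingCoeff_add_of_degree_lt (degree_C_le.trans_lt hpos),
      leadingCoeff_binomialPoly_succ hc0, hc, Nat.add_sub_cancel]

/-- For fixed `r ≥ 2`, `E'(r,n)` is a polynomial in `n` of degree `r − 1` with leading
coefficient `4·F_{r−1}/(r−1)!`; in particular it has the same degree and leading coefficient
as the polynomial giving `E(r,n)`. -/
theorem engstromFaces'_polynomial (r : ℕ) (hr : 2 ≤ r) :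
    ∃ P : Polynomial ℚ,
      (∀ n : ℕ, P.eval (n : ℚ) = engstromFaces' r n) ∧
      P.natDegree = r - 1 ∧
      P.leadingCoeff = 4 * (orderedBell (r - 1) : ℚ) / (Nat.factorial (r - 1)) ∧
      ∃ Q : Polynomial ℚ,
        (∀ n : ℕ, Q.eval (n : ℚ) = engstromFaces r n) ∧
        Q.natDegree = P.natDegree ∧ Q.leadingCoeff = P.leadingCoeff := by
  obtain ⟨P, hPeval, hPdeg, hPlead⟩ :=
    exists_polynomial_engstromFacesOf (2 * ·) rfl two_ne_zero hr
  obtain ⟨Q, hQeval, hQdeg, hQlead⟩ :=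
    exists_polynomial_engstromFacesOf (3 ^ · - 1) rfl two_ne_zero hr
  refine ⟨P, hPeval, hPdeg, ?_, Q, hQeval, hQdeg.trans hPdeg.symm, hQlead.trans hPlead.symm⟩
  rw [hPlead]
  push_cast
  ring
end
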